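/- arXiv:2103.08811 — 7 statements merged into one kernel-verified Lean document; each statement's English description precedes it below -/
import Mathlib

section
/- Let d ≥ 1 and let μ and ν be probability measures on ℝ^d with μ absolutely continuous with respect to Lebesgue measure. If φ₁ and φ₂ are convex functions on ℝ^d, each differentiable μ-almost everywhere, such that both (∇φ₁)_#μ = ν and (∇φ₂)_#μ = ν, then ∇φ₁(x) = ∇φ₂(x) for μ-almost every x. -/
/-!
Let `ψᵢ` be the Fenchel conjugate of `φᵢ` and `Tᵢ = ∇φᵢ`. Young's inequality
`⟪x, y⟫ ≤ φᵢ x + ψᵢ y` is an equality at `y = Tᵢ x`, so with `h = ψ₁ - ψ₂`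
(finite on a set of full `ν`-measure)
`h (T₁ x) ≤ φ₂ x - φ₁ x ≤ h (T₂ x)` for `μ`-a.e. `x`.
Since `h ∘ T₁` and `h ∘ T₂` both have law `h_# ν`, the two sides agree a.e., forcing equality in
Young's inequality for `φ₁` at `(x, T₂ x)`: then `T₂ x` is a subgradient of `φ₁` at a point of
differentiability, i.e. `T₂ x = T₁ x`.
-/

open MeasureTheory Set
open scoped RealInnerProductSpace

section ConvexAnalysis

variable {E : Type*} [NormedAddCommGroup E] [InnerProductSpace ℝ E] [CompleteSpace E]
  {φ : E → ℝ} {x : E}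

theorem ConvexOn.add_inner_gradient_le (hφ : ConvexOn ℝ univ φ) (hx : DifferentiableAt ℝ φ x)
    (z : E) : φ x + ⟪gradient φ x, z - x⟫ ≤ φ z := by
  have hline : HasDerivAt (φ ∘ AffineMap.lineMap (k := ℝ) x z) (fderiv ℝ φ x (z - x)) 0 := by
    have hφx : HasFDerivAt φ (fderiv ℝ φ x) (AffineMap.lineMap x z (0 : ℝ)) := by
      simpa using hx.hasFDerivAt
    exact hφx.comp_hasDerivAt (0 : ℝ) AffineMap.hasDerivAt_lineMap
  have := (hφ.comp_affineMap (AffineMap.lineMap x z)).le_slope_of_hasDerivAt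
    (mem_univ 0) (mem_univ 1) one_pos hline
  rw [gradient, InnerProductSpace.toDual_symm_apply, map_sub]
  simp only [map_sub, slope_def_field, Function.comp_apply, AffineMap.lineMap_apply_one,
    AffineMap.lineMap_apply_zero, sub_zero, div_one] at this
  linarith

theorem eq_gradient_of_forall_add_inner_le (hx : DifferentiableAt ℝ φ x) {y : E}
    (hy : ∀ z, φ x + ⟪y, z - x⟫ ≤ φ z) : y = gradient φ x := by
  have hmin : IsLocalMin (fun z => φ z - ⟪y, z⟫) x :=
    IsMinOn.isLocalMin (s := univ) (fun z _ => by
      have := hy z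
      simp only [mem_ofPred_eq, inner_sub_right] at this ⊢
      linarith) Filter.univ_mem
  have hzero := hmin.hasFDerivAt_eq_zero (hx.hasFDerivAt.sub (innerSL ℝ y).hasFDerivAt)
  rw [gradient, (InnerProductSpace.toDual ℝ E).eq_symm_apply]
  ext v
  have hv : fderiv ℝ φ x v - ⟪y, v⟫ = 0 := by simpa using congrArg (· v) hzero
  rw [InnerProductSpace.toDual_apply_apply]
  linarith

end ConvexAnalysis

section FenchelConjugate

variable {E : Type*} [NormedAddCommGroup E] [InnerProductSpace ℝ E]

/-- The Fenchel conjugate, with values in `EReal` since the supremum may be infinite. -/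
noncomputable def fenchelConjugate (φ : E → ℝ) (y : E) : EReal :=
  ⨆ x, ((⟪x, y⟫ - φ x : ℝ) : EReal)

variable {φ : E → ℝ}

theorem coe_inner_sub_le_fenchelConjugate (x y : E) :
    ((⟪x, y⟫ - φ x : ℝ) : EReal) ≤ fenchelConjugate φ y :=
  le_iSup (fun x => ((⟪x, y⟫ - φ x : ℝ) : EReal)) x

theorem inner_sub_le_toReal_fenchelConjugate {y : E} (hy : fenchelConjugate φ y ≠ ⊤) (x : E) :
    ⟪x, y⟫ - φ x ≤ (fenchelConjugate φ y).toReal := by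
  have hbot : fenchelConjugate φ y ≠ ⊥ :=
    ne_bot_of_le_ne_bot (EReal.coe_ne_bot _) (coe_inner_sub_le_fenchelConjugate 0 y)
  exact EReal.coe_le_coe_iff.1 <|
    (EReal.coe_toReal hy hbot).symm ▸ coe_inner_sub_le_fenchelConjugate x y

theorem measurable_fenchelConjugate [MeasurableSpace E] [OpensMeasurableSpace E] :
    Measurable (fenchelConjugate φ) := by
  refine LowerSemicontinuous.measurable (lowerSemicontinuous_iSup fun x => ?_)
  exact (continuous_coe_real_ereal.comp
    ((continuous_const.inner continuous_id).sub continuous_const)).lowerSemicontinuous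

theorem ConvexOn.fenchelConjugate_gradient [CompleteSpace E] (hφ : ConvexOn ℝ univ φ) {x : E}
    (hx : DifferentiableAt ℝ φ x) :
    fenchelConjugate φ (gradient φ x) = ((⟪x, gradient φ x⟫ - φ x : ℝ) : EReal) := by
  refine le_antisymm (iSup_le fun z => ?_) (coe_inner_sub_le_fenchelConjugate x _)
  have := hφ.add_inner_gradient_le hx z
  rw [inner_sub_right, real_inner_comm z, real_inner_comm x] at this
  exact EReal.coe_le_coe_iff.2 (by linarith)

theorem eq_gradient_of_toReal_fenchelConjugate_le [CompleteSpace E] {x y : E}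
    (hx : DifferentiableAt ℝ φ x) (hy : fenchelConjugate φ y ≠ ⊤)
    (hxy : (fenchelConjugate φ y).toReal ≤ ⟪x, y⟫ - φ x) : y = gradient φ x := by
  refine eq_gradient_of_forall_add_inner_le hx fun z => ?_
  have := inner_sub_le_toReal_fenchelConjugate hy z
  rw [inner_sub_right, real_inner_comm z y, real_inner_comm x y]
  linarith

end FenchelConjugate

section Pushforward

variable {α β : Type*} [MeasurableSpace α] [MeasurableSpace β] {μ : Measure α}

theorem ae_comp_of_map_eq {T₁ T₂ : α → β} (hT₁ : AEMeasurable T₁ μ) (hT₂ : AEMeasurable T₂ μ)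
    (hmap : μ.map T₁ = μ.map T₂) {p : β → Prop} (hp : MeasurableSet {y | p y})
    (h : ∀ᵐ x ∂μ, p (T₁ x)) : ∀ᵐ x ∂μ, p (T₂ x) :=
  (ae_map_iff hT₂ hp).1 (hmap ▸ (ae_map_iff hT₁ hp).2 h)

/-- Composing with the bounded, strictly monotone `arctan` reduces this to the equality case of
`∫ X ≤ ∫ Y`. -/
theorem ae_eq_of_ae_le_of_map_eq [IsFiniteMeasure μ] {X Y : α → ℝ} (hX : AEMeasurable X μ)
    (hY : AEMeasurable Y μ) (hle : X ≤ᵐ[μ] Y) (hmap : μ.map X = μ.map Y) : X =ᵐ[μ] Y := by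
  have hint : ∀ {Z : α → ℝ}, AEMeasurable Z μ → Integrable (Real.arctan ∘ Z) μ := fun hZ =>
    .of_bound (Real.continuous_arctan.comp_aestronglyMeasurable hZ.aestronglyMeasurable)
      (Real.pi / 2) (.of_forall fun _ => (abs_le.2 ⟨(Real.neg_pi_div_two_lt_arctan _).le,
        (Real.arctan_lt_pi_div_two _).le⟩))
  have hintegral : ∫ a, Real.arctan (X a) ∂μ = ∫ a, Real.arctan (Y a) ∂μ := by
    rw [← integral_map hX Real.continuous_arctan.aestronglyMeasurable, hmap,
      integral_map hY Real.continuous_arctan.aestronglyMeasurable]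
  have := (integral_eq_iff_of_ae_le (hint hX) (hint hY)
    (hle.mono fun _ h => Real.arctan_strictMono.monotone h)).1 hintegral
  exact this.mono fun _ h => Real.arctan_injective h

end Pushforward

section Uniqueness

variable {E : Type*} [NormedAddCommGroup E] [InnerProductSpace ℝ E] [CompleteSpace E]
  [MeasurableSpace E] [BorelSpace E]

theorem measurable_gradient (φ : E → ℝ) : Measurable (gradient φ) :=
  (InnerProductSpace.toDual ℝ E).symm.continuous.measurable.comp (measurable_fderiv ℝ φ)

theorem ae_fenchelConjugate_ne_top_of_map_gradient_eq {μ : Measure E} {φ : E → ℝ}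
    (hφ : ConvexOn ℝ univ φ) (hd : ∀ᵐ x ∂μ, DifferentiableAt ℝ φ x) {T : E → E}
    (hT : AEMeasurable T μ) (hmap : μ.map (gradient φ) = μ.map T) :
    ∀ᵐ x ∂μ, fenchelConjugate φ (T x) ≠ ⊤ :=
  ae_comp_of_map_eq (p := fun y => fenchelConjugate φ y ≠ ⊤) (measurable_gradient φ).aemeasurable
    hT hmap (measurable_fenchelConjugate (measurableSet_singleton ⊤).compl)
    (hd.mono fun _ hx => hφ.fenchelConjugate_gradient hx ▸ EReal.coe_ne_top _)

theorem ae_gradient_eq_of_map_gradient_eq {μ : Measure E} [IsFiniteMeasure μ] {φ₁ φ₂ : E → ℝ}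
    (hφ₁ : ConvexOn ℝ univ φ₁) (hφ₂ : ConvexOn ℝ univ φ₂)
    (hd₁ : ∀ᵐ x ∂μ, DifferentiableAt ℝ φ₁ x) (hd₂ : ∀ᵐ x ∂μ, DifferentiableAt ℝ φ₂ x)
    (hmap : μ.map (gradient φ₁) = μ.map (gradient φ₂)) :
    ∀ᵐ x ∂μ, gradient φ₁ x = gradient φ₂ x := by
  set ψ₁ := fenchelConjugate φ₁
  set ψ₂ := fenchelConjugate φ₂
  have hT₁ := measurable_gradient φ₁
  have hT₂ := measurable_gradient φ₂
  have hyoung₁ : ∀ᵐ x ∂μ, ψ₁ (gradient φ₁ x) = ((⟪x, gradient φ₁ x⟫ - φ₁ x : ℝ) : EReal) :=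
    hd₁.mono fun _ => hφ₁.fenchelConjugate_gradient
  have hyoung₂ : ∀ᵐ x ∂μ, ψ₂ (gradient φ₂ x) = ((⟪x, gradient φ₂ x⟫ - φ₂ x : ℝ) : EReal) :=
    hd₂.mono fun _ => hφ₂.fenchelConjugate_gradient
  have hfin₁ : ∀ᵐ x ∂μ, ψ₁ (gradient φ₂ x) ≠ ⊤ :=
    ae_fenchelConjugate_ne_top_of_map_gradient_eq hφ₁ hd₁ hT₂.aemeasurable hmap
  have hfin₂ : ∀ᵐ x ∂μ, ψ₂ (gradient φ₁ x) ≠ ⊤ :=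
    ae_fenchelConjugate_ne_top_of_map_gradient_eq hφ₂ hd₂ hT₁.aemeasurable hmap.symm
  set h : E → ℝ := fun y => (ψ₁ y).toReal - (ψ₂ y).toReal
  have hh : Measurable h :=
    measurable_fenchelConjugate.ereal_toReal.sub measurable_fenchelConjugate.ereal_toReal
  have hsandwich : ∀ᵐ x ∂μ,
      h (gradient φ₁ x) ≤ φ₂ x - φ₁ x ∧ φ₂ x - φ₁ x ≤ h (gradient φ₂ x) := by
    filter_upwards [hyoung₁, hyoung₂, hfin₁, hfin₂] with x hx₁ hx₂ hx₁₂ hx₂₁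
    have := inner_sub_le_toReal_fenchelConjugate hx₁₂ x
    have := inner_sub_le_toReal_fenchelConjugate hx₂₁ x
    simp only [h, hx₁, hx₂, EReal.toReal_coe]
    constructor <;> linarith
  have hmap_h : μ.map (h ∘ gradient φ₁) = μ.map (h ∘ gradient φ₂) := by
    rw [← Measure.map_map hh hT₁, hmap, Measure.map_map hh hT₂]
  have heq := ae_eq_of_ae_le_of_map_eq (hh.comp hT₁).aemeasurable (hh.comp hT₂).aemeasurable
    (hsandwich.mono fun _ hx => hx.1.trans hx.2) hmap_h
  filter_upwards [hd₁, hyoung₂, hfin₁, hsandwich, heq] with x hx hx₂ hx₁₂ hxs hxeq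
  refine (eq_gradient_of_toReal_fenchelConjugate_le hx hx₁₂ ?_).symm
  simp only [Function.comp_apply, h, hx₂, EReal.toReal_coe] at hxs hxeq
  linarith [hxs.1]

end Uniqueness

theorem mccann_uniqueness_general (d : ℕ)
    (μ ν : Measure (EuclideanSpace ℝ (Fin d)))
    [IsProbabilityMeasure μ]
    (φ₁ φ₂ : EuclideanSpace ℝ (Fin d) → ℝ)
    (hφ₁ : ConvexOn ℝ Set.univ φ₁) (hφ₂ : ConvexOn ℝ Set.univ φ₂)
    (hd₁ : ∀ᵐ x ∂μ, DifferentiableAt ℝ φ₁ x)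
    (hd₂ : ∀ᵐ x ∂μ, DifferentiableAt ℝ φ₂ x)
    (hpush₁ : μ.map (fun x => gradient φ₁ x) = ν)
    (hpush₂ : μ.map (fun x => gradient φ₂ x) = ν) :
    ∀ᵐ x ∂μ, gradient φ₁ x = gradient φ₂ x :=
  ae_gradient_eq_of_map_gradient_eq hφ₁ hφ₂ hd₁ hd₂ (hpush₁.trans hpush₂.symm)

/-- McCann's theorem (uniqueness part): if `μ` is absolutely continuous and the
gradients of two convex functions, each differentiable `μ`-a.e., both push `μ`
forward to `ν`, then the gradients agree `μ`-almost everywhere. -/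
theorem mccann_uniqueness (d : ℕ) (hd : 1 ≤ d)
    (μ ν : Measure (EuclideanSpace ℝ (Fin d)))
    [IsProbabilityMeasure μ] [IsProbabilityMeasure ν]
    (hμ : μ ≪ volume)
    (φ₁ φ₂ : EuclideanSpace ℝ (Fin d) → ℝ)
    (hφ₁ : ConvexOn ℝ Set.univ φ₁) (hφ₂ : ConvexOn ℝ Set.univ φ₂)
    (hd₁ : ∀ᵐ x ∂μ, DifferentiableAt ℝ φ₁ x)
    (hd₂ : ∀ᵐ x ∂μ, DifferentiableAt ℝ φ₂ x)
    (hpush₁ : μ.map (fun x => gradient φ₁ x) = ν)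
    (hpush₂ : μ.map (fun x => gradient φ₂ x) = ν) :
    ∀ᵐ x ∂μ, gradient φ₁ x = gradient φ₂ x :=
  mccann_uniqueness_general d μ ν φ₁ φ₂ hφ₁ hφ₂ hd₁ hd₂ hpush₁ hpush₂
end

section
/- Let μ and ν be probability measures on ℝ, both absolutely continuous with respect to Lebesgue measure and with finite second moments, with cumulative distribution functions F_μ and F_ν, and let T = Q_ν ∘ F_μ where Q_ν(p) = inf{x : p ≤ F_ν(x)}. Then T is an optimal transport map for the quadratic cost: for every measurable map T' : ℝ → ℝ with T'_#μ = ν, one has ∫ (x − T(x))² dμ(x) ≤ ∫ (x − T'(x))² dμ(x). -/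
open MeasureTheory

/-- The cumulative distribution function of a measure on `ℝ`. -/
noncomputable def cdfFun (μ : Measure ℝ) (x : ℝ) : ℝ :=
  (μ (Set.Iic x)).toReal

/-- The quantile function of a measure on `ℝ`. -/
noncomputable def quantileFun (μ : Measure ℝ) (p : ℝ) : ℝ :=
  sInf {x : ℝ | p ≤ cdfFun μ x}

open Set Filter Topology ProbabilityTheory

/-!
Since `μ` has no atoms, `F_μ` is continuous and pushes `μ` to the uniform law on `[0, 1]`; the
Galois connection `Q_ν p ≤ y ↔ p ≤ F_ν y` (for `0 < p < 1`) shows that `Q_ν` pushes the uniform law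
to `ν`. Hence `T = Q_ν ∘ F_μ` pushes `μ` to `ν`, and it is monotone on the full-measure set
`{0 < F_μ < 1}`.

Any two maps with law `ν` have the same second moment, so it suffices to show
`∫ x T'(x) dμ ≤ ∫ x T(x) dμ`. Writing `x (T x - T' x) = ∫ x (1[t < T x] - 1[t < T' x]) dt` and
using Fubini, it is enough that `∫_{T' > t} x dμ ≤ ∫_{T > t} x dμ` for each `t`: both sets have
mass `ν (t, ∞)`, and `{T > t}` is a.e. an upper set, which maximises `∫ x dμ` among sets of a given
mass.
-/

lemma MonotoneOn.aemeasurable_of_ae_mem {α β : Type*} [TopologicalSpace α] [MeasurableSpace α]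
    [BorelSpace α] [LinearOrder α] [OrderTopology α] [SecondCountableTopology α]
    [TopologicalSpace β] [MeasurableSpace β] [BorelSpace β] [LinearOrder β] [OrderClosedTopology β]
    {μ : Measure β} {f : β → α} {s : Set β} (hf : MonotoneOn f s) (hs : MeasurableSet s)
    (hμs : ∀ᵐ x ∂μ, x ∈ s) : AEMeasurable f μ := by
  rw [← Measure.restrict_eq_self_of_ae_mem hμs]
  exact aemeasurable_restrict_of_monotoneOn hs hf

lemma MonotoneOn.setOf_lt_ae_eq_upperClosure {α β : Type*} [MeasurableSpace α] [Preorder α]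
    [Preorder β] {μ : Measure α} {f : α → β} {s : Set α} (hf : MonotoneOn f s)
    (hμs : ∀ᵐ x ∂μ, x ∈ s) (t : β) :
    {x | t < f x} =ᵐ[μ] (upperClosure {x | x ∈ s ∧ t < f x} : Set α) := by
  filter_upwards [hμs] with x hx
  exact propext ⟨fun h => subset_upperClosure ⟨hx, h⟩,
    fun ⟨y, ⟨hy, hty⟩, hyx⟩ => hty.trans_le (hf hy hx hyx)⟩

lemma memLp_of_map_eq {α : Type*} [MeasurableSpace α] {μ : Measure α} {ν : Measure ℝ}
    {U : α → ℝ} {p : ENNReal} (hU : AEMeasurable U μ) (hUν : μ.map U = ν)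
    (hν : MemLp (fun y => y) p ν) : MemLp U p μ := by
  subst hUν
  exact (memLp_map_measure_iff hν.aestronglyMeasurable hU).1 hν

lemma integral_sq_of_map_eq {α : Type*} [MeasurableSpace α] {μ : Measure α} {ν : Measure ℝ}
    {U : α → ℝ} (hU : AEMeasurable U μ) (hUν : μ.map U = ν) :
    ∫ x, U x ^ 2 ∂μ = ∫ y, y ^ 2 ∂ν := by
  subst hUν
  exact (integral_map hU (continuous_pow 2).aestronglyMeasurable).symm

lemma integral_sub_sq {α : Type*} [MeasurableSpace α] {μ : Measure α} {f g : α → ℝ}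
    (hf : MemLp f 2 μ) (hg : MemLp g 2 μ) :
    ∫ x, (f x - g x) ^ 2 ∂μ = ∫ x, f x ^ 2 ∂μ - 2 * ∫ x, f x * g x ∂μ + ∫ x, g x ^ 2 ∂μ := by
  have hfg : Integrable (fun x => 2 * (f x * g x)) μ := (hf.integrable_mul hg).const_mul 2
  have hsub : Integrable (fun x => f x ^ 2 - 2 * (f x * g x)) μ := hf.integrable_sq.sub hfg
  simp_rw [sub_sq, mul_assoc]
  rw [integral_add hsub hg.integrable_sq, integral_sub hf.integrable_sq hfg, integral_const_mul]

lemma integrable_indicator_Ico_one (a b : ℝ) : Integrable ((Ico a b).indicator (1 : ℝ → ℝ)) :=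
  (integrable_indicator_iff measurableSet_Ico).2 (integrableOn_const measure_Ico_lt_top.ne)

lemma indicator_Iio_sub_indicator_Iio (a b t : ℝ) :
    (Iio a).indicator (1 : ℝ → ℝ) t - (Iio b).indicator 1 t =
      (Ico b a).indicator 1 t - (Ico a b).indicator 1 t := by
  by_cases ha : t < a <;> by_cases hb : t < b <;> simp [ha, hb, not_lt.1]

lemma integrable_indicator_Iio_sub_indicator_Iio (a b : ℝ) :
    Integrable (fun t => (Iio a).indicator (1 : ℝ → ℝ) t - (Iio b).indicator 1 t) := by
  simp_rw [indicator_Iio_sub_indicator_Iio]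
  exact (integrable_indicator_Ico_one _ _).sub (integrable_indicator_Ico_one _ _)

lemma integral_indicator_Iio_sub_indicator_Iio (a b : ℝ) :
    ∫ t, ((Iio a).indicator (1 : ℝ → ℝ) t - (Iio b).indicator 1 t) = a - b := by
  simp_rw [indicator_Iio_sub_indicator_Iio]
  rw [integral_sub (integrable_indicator_Ico_one _ _)
      (integrable_indicator_Ico_one _ _), integral_indicator_one measurableSet_Ico,
    integral_indicator_one measurableSet_Ico, Real.volume_real_Ico, Real.volume_real_Ico,
    ← neg_sub a b, max_zero_sub_max_neg_zero_eq_self]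

lemma integral_abs_indicator_Iio_sub_indicator_Iio (a b : ℝ) :
    ∫ t, |(Iio a).indicator (1 : ℝ → ℝ) t - (Iio b).indicator 1 t| = |a - b| := by
  have hsplit : ∀ t, |(Ico b a).indicator (1 : ℝ → ℝ) t - (Ico a b).indicator 1 t| =
      (Ico b a).indicator 1 t + (Ico a b).indicator 1 t := fun t => by
    by_cases ha : t < a <;> by_cases hb : t < b <;> simp [ha, hb, not_lt.1]
  simp_rw [indicator_Iio_sub_indicator_Iio, hsplit]
  rw [integral_add (integrable_indicator_Ico_one _ _)
      (integrable_indicator_Ico_one _ _), integral_indicator_one measurableSet_Ico,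
    integral_indicator_one measurableSet_Ico, Real.volume_real_Ico, Real.volume_real_Ico,
    ← neg_sub a b, max_zero_add_max_neg_zero_eq_abs_self]

lemma measurable_indicator_Iio_one :
    Measurable fun q : ℝ × ℝ => (Iio q.1).indicator (1 : ℝ → ℝ) q.2 := by
  simp only [indicator_apply]
  exact Measurable.ite (measurableSet_lt measurable_snd measurable_fst) measurable_const
    measurable_const

theorem integral_mul_sub_integral_mul_eq_integral_setIntegral_sub {μ : Measure ℝ} [SFinite μ]
    {T S : ℝ → ℝ} (hT : AEMeasurable T μ) (hS : AEMeasurable S μ) (hx : Integrable (fun x => x) μ)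
    (hxT : Integrable (fun x => x * T x) μ) (hxS : Integrable (fun x => x * S x) μ) :
    ∫ x, x * T x ∂μ - ∫ x, x * S x ∂μ =
      ∫ t, ((∫ x in {x | t < T x}, x ∂μ) - ∫ x in {x | t < S x}, x ∂μ) := by
  set f : ℝ → ℝ → ℝ := fun x t => x * ((Iio (T x)).indicator 1 t - (Iio (S x)).indicator 1 t)
  have hfm : AEStronglyMeasurable (Function.uncurry f) (μ.prod volume) :=
    (measurable_fst.aemeasurable.mul
      ((measurable_indicator_Iio_one.comp_aemeasurable
          (hT.comp_fst.prodMk measurable_snd.aemeasurable)).sub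
        (measurable_indicator_Iio_one.comp_aemeasurable
          (hS.comp_fst.prodMk measurable_snd.aemeasurable)))).aestronglyMeasurable
  have hnorm : ∀ x, ∫ t, ‖f x t‖ = |x| * |T x - S x| := fun x => by
    simp only [f, norm_mul, Real.norm_eq_abs]
    rw [integral_const_mul, integral_abs_indicator_Iio_sub_indicator_Iio]
  have hfi : Integrable (Function.uncurry f) (μ.prod volume) := by
    refine (integrable_prod_iff hfm).2
      ⟨ae_of_all _ fun x =>
        (integrable_indicator_Iio_sub_indicator_Iio (T x) (S x)).const_mul x, ?_⟩
    simp only [Function.uncurry_apply_pair, hnorm]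
    refine (hxT.norm.add hxS.norm).mono'
      (hx.aestronglyMeasurable.norm.mul (hT.sub hS).aestronglyMeasurable.norm)
      (ae_of_all _ fun x => ?_)
    simp only [Real.norm_eq_abs, abs_mul, abs_abs, Pi.add_apply, ← mul_add]
    exact mul_le_mul_of_nonneg_left (abs_sub _ _) (abs_nonneg x)
  have hslice_t : ∀ x, ∫ t, f x t = x * T x - x * S x := fun x => by
    rw [integral_const_mul, integral_indicator_Iio_sub_indicator_Iio, mul_sub]
  have hslice_x : ∀ t,
      ∫ x, f x t ∂μ = (∫ x in {x | t < T x}, x ∂μ) - ∫ x in {x | t < S x}, x ∂μ := fun t => by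
    have hTt : NullMeasurableSet {x | t < T x} μ := nullMeasurableSet_lt aemeasurable_const hT
    have hSt : NullMeasurableSet {x | t < S x} μ := nullMeasurableSet_lt aemeasurable_const hS
    have hf_eq : (fun x => f x t) = fun x =>
        {x | t < T x}.indicator (fun x => x) x - {x | t < S x}.indicator (fun x => x) x := by
      funext x
      by_cases hTx : t < T x <;> by_cases hSx : t < S x <;> simp [f, hTx, hSx]
    rw [hf_eq, integral_sub (hx.indicator₀ hTt) (hx.indicator₀ hSt), integral_indicator₀ hTt,
      integral_indicator₀ hSt]
  rw [← integral_sub hxT hxS]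
  simp_rw [← hslice_t, ← hslice_x]
  exact integral_integral_swap hfi

section Rearrangement

variable {μ : Measure ℝ} [IsFiniteMeasure μ]

theorem setIntegral_le_setIntegral_of_isUpperSet (hx : Integrable (fun x => x) μ) {A U : Set ℝ}
    (hA : NullMeasurableSet A μ) (hU : IsUpperSet U) (hAU : μ A = μ U) : ∫ x in A, x ∂μ ≤ ∫ x in U, x ∂μ := by
  obtain rfl | hne := U.eq_empty_or_nonempty
  · rw [measure_empty, ← Measure.restrict_eq_zero] at hAU
    simp [hAU]
  by_cases hbdd : BddBelow U
  swap
  · have hUuniv : U = univ := eq_univ_of_forall fun x => by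
      obtain ⟨y, hyU, hyx⟩ := not_bddBelow_iff.1 hbdd x
      exact hU hyx.le hyU
    subst hUuniv
    have hAc : μ Aᶜ = 0 := by rw [measure_compl₀ hA (measure_ne_top μ A), hAU, tsub_self]
    rw [setIntegral_congr_set (ae_eq_univ.2 hAc)]
  -- `U` lies above `c = inf U` and its complement below, so `(x - c) (1_U - 1_A) ≥ 0`.
  set c := sInf U
  have hUc : ∀ x ∈ U, c ≤ x := fun x hx => csInf_le hbdd hx
  have hcU : ∀ x ∉ U, x ≤ c := fun x hx =>
    le_csInf hne fun u hu => le_of_lt (not_le.1 fun hux => hx (hU hux hu))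
  have hxc : Integrable (fun x => x - c) μ := hx.sub (integrable_const c)
  have hpos : 0 ≤ ∫ x, (U.indicator (fun x => x - c) x - A.indicator (fun x => x - c) x) ∂μ := by
    refine integral_nonneg fun x => ?_
    by_cases hxU : x ∈ U <;> by_cases hxA : x ∈ A <;>
      simp [hxU, hxA, hUc x, hcU x]
  rw [integral_sub (hxc.indicator hU.ordConnected.measurableSet) (hxc.indicator₀ hA),
    integral_indicator hU.ordConnected.measurableSet, integral_indicator₀ hA,
    integral_sub hx.integrableOn (integrable_const c), integral_sub hx.integrableOn
      (integrable_const c), setIntegral_const, setIntegral_const, measureReal_def,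
    measureReal_def, hAU] at hpos
  linarith

theorem setIntegral_setOf_lt_le_of_monotoneOn {T S : ℝ → ℝ} {s : Set ℝ} (hT : MonotoneOn T s)
    (hμs : ∀ᵐ x ∂μ, x ∈ s) (hTm : AEMeasurable T μ) (hS : AEMeasurable S μ)
    (hmap : μ.map S = μ.map T) (hx : Integrable (fun x => x) μ) (t : ℝ) :
    ∫ x in {x | t < S x}, x ∂μ ≤ ∫ x in {x | t < T x}, x ∂μ := by
  have hU := hT.setOf_lt_ae_eq_upperClosure hμs t
  rw [setIntegral_congr_set hU]
  refine setIntegral_le_setIntegral_of_isUpperSet hx (nullMeasurableSet_lt aemeasurable_const hS)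
    (upperClosure _).upper ?_
  rw [← measure_congr hU]
  have hIoi := congrArg (· (Ioi t)) hmap
  simp only [Measure.map_apply_of_aemeasurable hS measurableSet_Ioi,
    Measure.map_apply_of_aemeasurable hTm measurableSet_Ioi] at hIoi
  exact hIoi

theorem integral_mul_le_integral_mul_of_monotoneOn {T S : ℝ → ℝ} {s : Set ℝ}
    (hT : MonotoneOn T s) (hs : MeasurableSet s) (hμs : ∀ᵐ x ∂μ, x ∈ s) (hS : AEMeasurable S μ)
    (hmap : μ.map S = μ.map T) (hx : Integrable (fun x => x) μ)
    (hxT : Integrable (fun x => x * T x) μ) (hxS : Integrable (fun x => x * S x) μ) :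
    ∫ x, x * S x ∂μ ≤ ∫ x, x * T x ∂μ := by
  have hTm := hT.aemeasurable_of_ae_mem hs hμs
  rw [← sub_nonneg, integral_mul_sub_integral_mul_eq_integral_setIntegral_sub hTm hS hx hxT hxS]
  exact integral_nonneg fun t =>
    sub_nonneg.2 (setIntegral_setOf_lt_le_of_monotoneOn hT hμs hTm hS hmap hx t)

theorem integral_sq_sub_le_of_monotoneOn {ν : Measure ℝ} {T S : ℝ → ℝ} {s : Set ℝ}
    (hT : MonotoneOn T s) (hs : MeasurableSet s) (hμs : ∀ᵐ x ∂μ, x ∈ s) (hS : AEMeasurable S μ)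
    (hTν : μ.map T = ν) (hSν : μ.map S = ν) (hμ2 : Integrable (fun x => x ^ 2) μ)
    (hν2 : Integrable (fun y => y ^ 2) ν) :
    ∫ x, (x - T x) ^ 2 ∂μ ≤ ∫ x, (x - S x) ^ 2 ∂μ := by
  have hTm := hT.aemeasurable_of_ae_mem hs hμs
  have hx : MemLp (fun x => x) 2 μ :=
    (memLp_two_iff_integrable_sq aestronglyMeasurable_id).2 hμ2
  have hy : MemLp (fun y => y) 2 ν :=
    (memLp_two_iff_integrable_sq aestronglyMeasurable_id).2 hν2
  have hT2 := memLp_of_map_eq hTm hTν hy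
  have hS2 := memLp_of_map_eq hS hSν hy
  have hcorr := integral_mul_le_integral_mul_of_monotoneOn hT hs hμs hS (hSν.trans hTν.symm)
    (hx.integrable one_le_two) (hx.integrable_mul hT2) (hx.integrable_mul hS2)
  rw [integral_sub_sq hx hT2, integral_sub_sq hx hS2, integral_sq_of_map_eq hTm hTν,
    integral_sq_of_map_eq hS hSν]
  linarith

end Rearrangement

lemma cdfFun_nonneg (μ : Measure ℝ) (x : ℝ) : 0 ≤ cdfFun μ x := ENNReal.toReal_nonneg

section Cdf

variable (μ : Measure ℝ) [IsProbabilityMeasure μ]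

lemma cdfFun_eq_cdf : cdfFun μ = cdf μ := by
  funext x
  rw [cdfFun, cdf_eq_real, measureReal_def]

lemma monotone_cdfFun : Monotone (cdfFun μ) := cdfFun_eq_cdf μ ▸ monotone_cdf μ

lemma cdfFun_le_one (x : ℝ) : cdfFun μ x ≤ 1 := cdfFun_eq_cdf μ ▸ cdf_le_one μ x

lemma ofReal_cdfFun (x : ℝ) : ENNReal.ofReal (cdfFun μ x) = μ (Iic x) :=
  ENNReal.ofReal_toReal (measure_ne_top μ _)

lemma tendsto_cdfFun_atBot : Tendsto (cdfFun μ) atBot (𝓝 0) :=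
  cdfFun_eq_cdf μ ▸ tendsto_cdf_atBot μ

lemma tendsto_cdfFun_atTop : Tendsto (cdfFun μ) atTop (𝓝 1) :=
  cdfFun_eq_cdf μ ▸ tendsto_cdf_atTop μ

lemma continuous_cdfFun [NullSingletonClass μ] : Continuous (cdfFun μ) := by
  rw [cdfFun_eq_cdf μ, continuous_iff_continuousAt]
  intro a
  rw [(monotone_cdf μ).continuousAt_iff_leftLim_eq_rightLim, (cdf μ).rightLim_eq]
  have h := (cdf μ).measure_singleton a
  rw [measure_cdf, measure_singleton, eq_comm, ENNReal.ofReal_eq_zero, sub_nonpos] at h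
  exact le_antisymm ((monotone_cdf μ).leftLim_le le_rfl) h

lemma measure_cdfFun_le [NullSingletonClass μ] {c : ℝ} (hc : c ∈ Icc 0 1) :
    μ {x | cdfFun μ x ≤ c} = ENNReal.ofReal c := by
  obtain hc1 | rfl := hc.2.lt_or_eq
  swap
  · simp [cdfFun_le_one μ]
  set S := {x | cdfFun μ x ≤ c}
  obtain hS | hS := S.eq_empty_or_nonempty
  · have hc0 : c ≤ 0 := ge_of_tendsto' (tendsto_cdfFun_atBot μ) fun x =>
      le_of_lt (not_le.1 fun h => eq_empty_iff_forall_notMem.1 hS x h)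
    rw [hS, measure_empty, ENNReal.ofReal_of_nonpos hc0]
  have hbdd : BddAbove S := by
    obtain ⟨z, hz⟩ :=
      ((tendsto_cdfFun_atTop μ).eventually (eventually_gt_nhds hc1)).exists_forall_of_atTop
    exact ⟨z, fun x hx => le_of_not_gt fun hzx => (hz x hzx.le).not_ge hx⟩
  set a := sSup S
  have haS : a ∈ S := (isClosed_le (continuous_cdfFun μ) continuous_const).csSup_mem hS hbdd
  have hSa : S = Iic a :=
    Subset.antisymm (fun x hx => le_csSup hbdd hx) fun x hx => (monotone_cdfFun μ hx).trans haS
  have hFa : cdfFun μ a = c := by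
    refine le_antisymm haS (ge_of_tendsto
      ((continuous_cdfFun μ).continuousAt.tendsto.mono_left (nhdsWithin_le_nhds (s := Ioi a)))
      ?_)
    filter_upwards [self_mem_nhdsWithin] with z (hz : a < z)
    exact (not_le.1 fun h => hz.not_ge (le_csSup hbdd h)).le
  rw [hSa, ← hFa, ofReal_cdfFun]

end Cdf

section Uniform

lemma volume_restrict_Icc_Iic {c : ℝ} (hc : c ∈ Icc 0 1) :
    volume.restrict (Icc 0 1) (Iic c) = ENNReal.ofReal c := by
  have : Iic c ∩ Icc 0 1 = Icc 0 c :=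
    Set.ext fun x => ⟨fun h => ⟨h.2.1, h.1⟩, fun h => ⟨h.2, h.1, h.2.trans hc.2⟩⟩
  rw [Measure.restrict_apply measurableSet_Iic, this, Real.volume_Icc, sub_zero]

lemma ae_restrict_Icc_mem_Ioo : ∀ᵐ p ∂volume.restrict (Icc (0 : ℝ) 1), p ∈ Ioo 0 1 := by
  rw [Measure.restrict_congr_set Ioo_ae_eq_Icc.symm]
  exact ae_restrict_mem measurableSet_Ioo

instance isProbabilityMeasure_volume_restrict_Icc :
    IsProbabilityMeasure (volume.restrict (Icc (0 : ℝ) 1)) :=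
  ⟨by simp⟩

end Uniform

section Quantile

variable (ν : Measure ℝ) [IsProbabilityMeasure ν]

lemma bddBelow_setOf_le_cdfFun {p : ℝ} (hp : 0 < p) : BddBelow {x | p ≤ cdfFun ν x} := by
  obtain ⟨z, hz⟩ :=
    ((tendsto_cdfFun_atBot ν).eventually (eventually_lt_nhds hp)).exists_forall_of_atBot
  exact ⟨z, fun x hx => le_of_not_gt fun hxz => (hz x hxz.le).not_ge hx⟩

lemma nonempty_setOf_le_cdfFun {p : ℝ} (hp : p < 1) : {x | p ≤ cdfFun ν x}.Nonempty :=
  ((tendsto_cdfFun_atTop ν).eventually (eventually_gt_nhds hp)).exists.imp fun _ => le_of_lt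

lemma le_cdfFun_quantileFun {p : ℝ} (hp : p ∈ Ioo 0 1) : p ≤ cdfFun ν (quantileFun ν p) := by
  have hright : ContinuousWithinAt (cdfFun ν) (Ioi (quantileFun ν p)) (quantileFun ν p) := by
    rw [cdfFun_eq_cdf]
    exact ((cdf ν).right_continuous _).mono Ioi_subset_Ici_self
  refine ge_of_tendsto hright.tendsto (eventually_nhdsWithin_of_forall fun z hz => ?_)
  obtain ⟨w, hw, hwz⟩ :=
    (csInf_lt_iff (bddBelow_setOf_le_cdfFun ν hp.1) (nonempty_setOf_le_cdfFun ν hp.2)).1 hz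
  exact hw.trans (monotone_cdfFun ν hwz.le)

lemma quantileFun_le_iff {p : ℝ} (hp : p ∈ Ioo 0 1) {y : ℝ} :
    quantileFun ν p ≤ y ↔ p ≤ cdfFun ν y :=
  ⟨fun h => (le_cdfFun_quantileFun ν hp).trans (monotone_cdfFun ν h),
    fun h => csInf_le (bddBelow_setOf_le_cdfFun ν hp.1) h⟩

lemma monotoneOn_quantileFun : MonotoneOn (quantileFun ν) (Ioo 0 1) := fun _ hp _ hq hpq =>
  (quantileFun_le_iff ν hp).2 (hpq.trans (le_cdfFun_quantileFun ν hq))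

lemma aemeasurable_quantileFun : AEMeasurable (quantileFun ν) (volume.restrict (Icc 0 1)) :=
  (monotoneOn_quantileFun ν).aemeasurable_of_ae_mem measurableSet_Ioo ae_restrict_Icc_mem_Ioo

theorem map_quantileFun : (volume.restrict (Icc 0 1)).map (quantileFun ν) = ν := by
  have := Measure.isProbabilityMeasure_map (aemeasurable_quantileFun ν)
  refine Measure.ext_of_Iic _ _ fun y => ?_
  rw [Measure.map_apply_of_aemeasurable (aemeasurable_quantileFun ν) measurableSet_Iic,
    ← ofReal_cdfFun, ← volume_restrict_Icc_Iic ⟨cdfFun_nonneg ν y, cdfFun_le_one ν y⟩]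
  refine measure_congr ?_
  filter_upwards [ae_restrict_Icc_mem_Ioo] with p hp
  exact propext (quantileFun_le_iff ν hp)

end Quantile

section TransportMap

variable (μ ν : Measure ℝ) [IsProbabilityMeasure μ] [IsProbabilityMeasure ν]

theorem map_cdfFun [NullSingletonClass μ] : μ.map (cdfFun μ) = volume.restrict (Icc 0 1) := by
  have hF := (monotone_cdfFun μ).measurable
  have := Measure.isProbabilityMeasure_map hF.aemeasurable (μ := μ)
  refine Measure.ext_of_Iic _ _ fun c => ?_
  rw [Measure.map_apply hF measurableSet_Iic]
  obtain hc0 | hc0 := lt_or_ge c 0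
  · have hF : cdfFun μ ⁻¹' Iic c = ∅ :=
      eq_empty_of_forall_notMem fun x hx => (cdfFun_nonneg μ x).not_gt (lt_of_le_of_lt hx hc0)
    have hI : Iic c ∩ Icc 0 1 = ∅ :=
      eq_empty_of_forall_notMem fun x hx => hx.2.1.not_gt (lt_of_le_of_lt hx.1 hc0)
    rw [hF, measure_empty, Measure.restrict_apply measurableSet_Iic, hI, measure_empty]
  obtain hc1 | hc1 := le_or_gt c 1
  · exact (measure_cdfFun_le μ ⟨hc0, hc1⟩).trans (volume_restrict_Icc_Iic ⟨hc0, hc1⟩).symm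
  · have hF : cdfFun μ ⁻¹' Iic c = univ :=
      eq_univ_of_forall fun x => (cdfFun_le_one μ x).trans hc1.le
    have hI : Iic c ∩ Icc 0 1 = Icc 0 1 := inter_eq_right.2 fun x hx => hx.2.trans hc1.le
    rw [hF, measure_univ, Measure.restrict_apply measurableSet_Iic, hI, Real.volume_Icc]
    simp

lemma ae_cdfFun_mem_Ioo [NullSingletonClass μ] : ∀ᵐ x ∂μ, cdfFun μ x ∈ Ioo 0 1 :=
  ae_of_ae_map (monotone_cdfFun μ).measurable.aemeasurable
    ((map_cdfFun μ).symm ▸ ae_restrict_Icc_mem_Ioo)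

-- Outside `(0, 1)`, `quantileFun ν` is the `sInf` of an unbounded or possibly empty set.
lemma monotoneOn_quantileFun_comp_cdfFun :
    MonotoneOn (quantileFun ν ∘ cdfFun μ) (cdfFun μ ⁻¹' Ioo 0 1) :=
  (monotoneOn_quantileFun ν).comp ((monotone_cdfFun μ).monotoneOn _) fun _ hx => hx

theorem map_quantileFun_comp_cdfFun [NullSingletonClass μ] :
    μ.map (quantileFun ν ∘ cdfFun μ) = ν := by
  have hQ : AEMeasurable (quantileFun ν) (μ.map (cdfFun μ)) :=
    (map_cdfFun μ).symm ▸ aemeasurable_quantileFun ν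
  rw [← hQ.map_map_of_aemeasurable (monotone_cdfFun μ).measurable.aemeasurable, map_cdfFun,
    map_quantileFun]

end TransportMap

theorem quantile_comp_cdf_optimal_general (μ ν : Measure ℝ)
    [IsProbabilityMeasure μ] [IsProbabilityMeasure ν]
    (hμ : μ ≪ volume)
    (hμ2 : Integrable (fun x => x ^ 2) μ) (hν2 : Integrable (fun x => x ^ 2) ν) :
    ∀ T' : ℝ → ℝ, Measurable T' → μ.map T' = ν →
      ∫ x, (x - quantileFun ν (cdfFun μ x)) ^ 2 ∂μ ≤ ∫ x, (x - T' x) ^ 2 ∂μ := by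
  intro T' hT' hT'ν
  have : NullSingletonClass μ := ⟨fun x => hμ (measure_singleton x)⟩
  exact integral_sq_sub_le_of_monotoneOn (monotoneOn_quantileFun_comp_cdfFun μ ν)
    (measurableSet_preimage (monotone_cdfFun μ).measurable measurableSet_Ioo)
    (ae_cdfFun_mem_Ioo μ) hT'.aemeasurable (map_quantileFun_comp_cdfFun μ ν) hT'ν hμ2 hν2

/-- In dimension one, the map `T = Q_ν ∘ F_μ` is an optimal transport map for
the quadratic cost: any other measurable map pushing `μ` to `ν` incurs at least
as large a quadratic transport cost. -/
theorem quantile_comp_cdf_optimal (μ ν : Measure ℝ)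
    [IsProbabilityMeasure μ] [IsProbabilityMeasure ν]
    (hμ : μ ≪ volume) (hν : ν ≪ volume)
    (hμ2 : Integrable (fun x => x ^ 2) μ) (hν2 : Integrable (fun x => x ^ 2) ν) :
    ∀ T' : ℝ → ℝ, Measurable T' → μ.map T' = ν →
      ∫ x, (x - quantileFun ν (cdfFun μ x)) ^ 2 ∂μ ≤ ∫ x, (x - T' x) ^ 2 ∂μ :=
  quantile_comp_cdf_optimal_general μ ν hμ hμ2 hν2
end

section
/- Let n ≥ 1, let C be a real n × n matrix, and let ε > 0. Define J_ε(P) = ∑_{i,j} C_{ij} P_{ij} − ε H(P) on the transport polytope Π_n, where H(P) = −∑_{i,j} P_{ij} log P_{ij} (with 0 log 0 = 0). Then there exists a unique P⁰ ∈ Π_n minimizing J_ε over Π_n, and moreover every entry of P⁰ is strictly positive. -/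
open scoped BigOperators
open Finset

/-- The transport polytope: `n × n` matrices with nonnegative entries whose
every row sum and every column sum equals `1/n`. -/
def transportPolytope (n : ℕ) : Set (Matrix (Fin n) (Fin n) ℝ) :=
  {P | (∀ i j, 0 ≤ P i j) ∧ (∀ i, ∑ j, P i j = 1 / n) ∧ (∀ j, ∑ i, P i j = 1 / n)}

/-- The entropy of a matrix, `H(P) = -∑ P_{ij} log P_{ij}` (with `0 log 0 = 0`,
as `Real.log 0 = 0`). -/
noncomputable def matrixEntropy {n : ℕ} (P : Matrix (Fin n) (Fin n) ℝ) : ℝ :=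
  -∑ i, ∑ j, P i j * Real.log (P i j)

noncomputable def Jf {n : ℕ} (C : Matrix (Fin n) (Fin n) ℝ) (ε : ℝ)
    (P : Matrix (Fin n) (Fin n) ℝ) : ℝ :=
  (∑ i, ∑ j, C i j * P i j) - ε * matrixEntropy P

lemma Jf_eq {n : ℕ} (C : Matrix (Fin n) (Fin n) ℝ) (ε : ℝ) (P : Matrix (Fin n) (Fin n) ℝ) :
    Jf C ε P = ∑ p : Fin n × Fin n,
      (C p.1 p.2 * P p.1 p.2 + ε * (P p.1 p.2 * Real.log (P p.1 p.2))) := by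
  simp only [Jf, matrixEntropy, mul_neg, sub_neg_eq_add, Fintype.sum_prod_type,
    Finset.mul_sum, ← Finset.sum_add_distrib]

lemma isClosed_polytope (n : ℕ) : IsClosed (transportPolytope n) := by
  have : transportPolytope n =
      (⋂ i, ⋂ j, {P : Matrix (Fin n) (Fin n) ℝ | 0 ≤ P i j}) ∩
      ((⋂ i, {P : Matrix (Fin n) (Fin n) ℝ | ∑ j, P i j = 1 / n}) ∩
       (⋂ j, {P : Matrix (Fin n) (Fin n) ℝ | ∑ i, P i j = 1 / n})) := by
    ext P
    simp [transportPolytope, Set.mem_iInter, forall_and]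
  rw [this]
  exact (isClosed_iInter fun i => isClosed_iInter fun j =>
      isClosed_le continuous_const (continuous_id.matrix_elem i j)).inter
    ((isClosed_iInter fun i => isClosed_eq
        (continuous_finset_sum _ fun j _ => continuous_id.matrix_elem i j) continuous_const).inter
     (isClosed_iInter fun j => isClosed_eq
        (continuous_finset_sum _ fun i _ => continuous_id.matrix_elem i j) continuous_const))

lemma isCompact_polytope (n : ℕ) : IsCompact (transportPolytope n) := by
  have hK : IsCompact {P : Matrix (Fin n) (Fin n) ℝ | ∀ i j, P i j ∈ Set.Icc (0:ℝ) 1} := by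
    have : {P : Matrix (Fin n) (Fin n) ℝ | ∀ i j, P i j ∈ Set.Icc (0:ℝ) 1} =
        Set.univ.pi (fun _ : Fin n => Set.univ.pi fun _ : Fin n => Set.Icc (0:ℝ) 1) := by
      ext P
      constructor
      · intro h
        exact fun i _ => fun j _ => h i j
      · intro h i j
        exact h i (Set.mem_univ i) j (Set.mem_univ j)
    rw [this]
    exact isCompact_univ_pi fun _ => isCompact_univ_pi fun _ => isCompact_Icc
  refine hK.of_isClosed_subset (isClosed_polytope n) ?_
  rintro P ⟨hpos, hrow, _⟩ i j
  refine ⟨hpos i j, ?_⟩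
  calc P i j ≤ ∑ j', P i j' := Finset.single_le_sum (fun j' _ => hpos i j') (mem_univ j)
    _ = 1 / n := hrow i
    _ ≤ 1 := by
      rcases Nat.eq_zero_or_pos n with h | h
      · simp [h]
      · rw [div_le_one (by exact_mod_cast h)]; exact_mod_cast h

lemma continuous_Jf {n : ℕ} (C : Matrix (Fin n) (Fin n) ℝ) (ε : ℝ) :
    Continuous (Jf C ε) := by
  have h1 : Continuous fun P : Matrix (Fin n) (Fin n) ℝ => ∑ i, ∑ j, C i j * P i j :=
    continuous_finset_sum _ fun i _ => continuous_finset_sum _ fun j _ =>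
      (continuous_const.mul (continuous_id.matrix_elem i j))
  have h2 : Continuous fun P : Matrix (Fin n) (Fin n) ℝ => matrixEntropy P := by
    unfold matrixEntropy
    exact (continuous_finset_sum _ fun i _ => continuous_finset_sum _ fun j _ =>
      (Real.continuous_mul_log.comp (continuous_id.matrix_elem i j))).neg
  exact h1.sub (continuous_const.mul h2)

lemma comb_mem {n : ℕ} {P Q : Matrix (Fin n) (Fin n) ℝ} (hP : P ∈ transportPolytope n)
    (hQ : Q ∈ transportPolytope n) {t : ℝ} (ht0 : 0 ≤ t) (ht1 : t ≤ 1) :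
    (fun i j => (1 - t) * P i j + t * Q i j) ∈ transportPolytope n := by
  obtain ⟨hP0, hPr, hPc⟩ := hP
  obtain ⟨hQ0, hQr, hQc⟩ := hQ
  refine ⟨fun i j => add_nonneg (mul_nonneg (by linarith) (hP0 i j)) (mul_nonneg ht0 (hQ0 i j)),
    fun i => ?_, fun j => ?_⟩
  · rw [Finset.sum_add_distrib, ← Finset.mul_sum, ← Finset.mul_sum, hPr, hQr]; ring
  · rw [Finset.sum_add_distrib, ← Finset.mul_sum, ← Finset.mul_sum, hPc, hQc]; ring

lemma uniform_mem (n : ℕ) (hn : 1 ≤ n) :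
    (fun _ _ => 1 / n * (1 / n) : Matrix (Fin n) (Fin n) ℝ) ∈ transportPolytope n := by
  have hnpos : (0:ℝ) < n := by exact_mod_cast hn
  refine ⟨fun i j => by positivity, fun i => ?_, fun j => ?_⟩ <;>
    · rw [Finset.sum_const, Finset.card_univ, Fintype.card_fin, nsmul_eq_mul]
      field_simp

lemma min_pos {n : ℕ} (hn : 1 ≤ n) (C : Matrix (Fin n) (Fin n) ℝ) {ε : ℝ} (hε : 0 < ε)
    {P0 : Matrix (Fin n) (Fin n) ℝ} (hP0 : P0 ∈ transportPolytope n)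
    (hmin : ∀ P ∈ transportPolytope n, Jf C ε P0 ≤ Jf C ε P) :
    ∀ i j, 0 < P0 i j := by
  by_contra h
  push_neg at h
  obtain ⟨i0, j0, hle⟩ := h
  have hz : P0 i0 j0 = 0 := le_antisymm hle (hP0.1 i0 j0)
  set u : ℝ := 1 / n * (1 / n) with hu
  have hnpos : (0:ℝ) < n := by exact_mod_cast hn
  have hupos : 0 < u := by positivity
  set f : ℝ → ℝ := fun x => x * Real.log x with hf
  set b : Fin n × Fin n → ℝ := fun p =>
    C p.1 p.2 * (u - P0 p.1 p.2) +
      ε * (if P0 p.1 p.2 = 0 then u * Real.log u else f u - f (P0 p.1 p.2)) with hb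
  set M : ℝ := ∑ p : Fin n × Fin n, b p with hM
  set t : ℝ := min (1/2) (Real.exp (-(M + 1) / (ε * u))) with htdef
  have ht0 : 0 < t := lt_min (by norm_num) (Real.exp_pos _)
  have ht1 : t < 1 := lt_of_le_of_lt (min_le_left _ _) (by norm_num)
  have hlogt : Real.log t ≤ -(M + 1) / (ε * u) := by
    calc Real.log t ≤ Real.log (Real.exp (-(M + 1) / (ε * u))) :=
          Real.log_le_log ht0 (min_le_right _ _)
      _ = -(M + 1) / (ε * u) := Real.log_exp _
  have hlogt0 : Real.log t ≤ 0 := Real.log_nonpos ht0.le ht1.le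
  set Pt : Matrix (Fin n) (Fin n) ℝ := fun i j => (1 - t) * P0 i j + t * u with hPtdef
  have hPtmem : Pt ∈ transportPolytope n := comb_mem hP0 (uniform_mem n hn) ht0.le ht1.le
  have key : ∀ p : Fin n × Fin n,
      (C p.1 p.2 * Pt p.1 p.2 + ε * (Pt p.1 p.2 * Real.log (Pt p.1 p.2))) -
        (C p.1 p.2 * P0 p.1 p.2 + ε * (P0 p.1 p.2 * Real.log (P0 p.1 p.2))) ≤
      t * b p + (if p = (i0, j0) then ε * (t * u * Real.log t) else 0) := by
    intro p
    by_cases hp : P0 p.1 p.2 = 0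
    · have hPtp : Pt p.1 p.2 = t * u := by simp [hPtdef, hp]
      have hlog : Real.log (t * u) = Real.log t + Real.log u :=
        Real.log_mul ht0.ne' hupos.ne'
      rw [hPtp, hlog, hp]
      simp only [hb, hp, eq_self_iff_true, if_true]
      by_cases hpe : p = (i0, j0)
      · rw [if_pos hpe]
        apply le_of_eq
        ring
      · rw [if_neg hpe]
        nlinarith [mul_nonneg (mul_nonneg hε.le (mul_nonneg ht0.le hupos.le)) (neg_nonneg.2 hlogt0)]
    · have hppos : 0 < P0 p.1 p.2 := lt_of_le_of_ne (hP0.1 p.1 p.2) (Ne.symm hp)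
      have hpe : p ≠ (i0, j0) := by
        intro hc; rw [hc] at hp; exact hp hz
      rw [if_neg hpe, add_zero]
      have hconv := Real.convexOn_mul_log.2 (Set.mem_Ici.2 hppos.le) (Set.mem_Ici.2 hupos.le)
        (by linarith : (0:ℝ) ≤ 1 - t) ht0.le (by ring)
      simp only [smul_eq_mul] at hconv
      have hPtp : Pt p.1 p.2 = (1 - t) * P0 p.1 p.2 + t * u := rfl
      rw [hPtp]
      simp only [hb, if_neg hp, hf] at *
      nlinarith [hconv]
  have hsum : Jf C ε Pt - Jf C ε P0 ≤ t * M + ε * (t * u * Real.log t) := by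
    rw [Jf_eq, Jf_eq, ← Finset.sum_sub_distrib]
    calc (∑ p : Fin n × Fin n, _) ≤
        ∑ p : Fin n × Fin n,
          (t * b p + (if p = (i0, j0) then ε * (t * u * Real.log t) else 0)) :=
          Finset.sum_le_sum fun p _ => key p
      _ = t * M + ε * (t * u * Real.log t) := by
          rw [Finset.sum_add_distrib, ← Finset.mul_sum, Finset.sum_ite_eq' Finset.univ (i0, j0)]
          simp [hM]
  have hneg : t * M + ε * (t * u * Real.log t) < 0 := by
    have h1 : ε * (t * u * Real.log t) ≤ ε * (t * u * (-(M + 1) / (ε * u))) := by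
      gcongr
    have h2 : ε * (t * u * (-(M + 1) / (ε * u))) = -t * (M + 1) := by
      field_simp
    nlinarith
  have := hmin Pt hPtmem
  linarith

lemma min_unique {n : ℕ} (C : Matrix (Fin n) (Fin n) ℝ) {ε : ℝ} (hε : 0 < ε)
    {P P0 : Matrix (Fin n) (Fin n) ℝ} (hP : P ∈ transportPolytope n)
    (hP0 : P0 ∈ transportPolytope n) (hJ : Jf C ε P = Jf C ε P0)
    (hmin : ∀ Q ∈ transportPolytope n, Jf C ε P0 ≤ Jf C ε Q) : P = P0 := by
  by_contra hne
  have hdiff : ∃ p : Fin n × Fin n, P p.1 p.2 ≠ P0 p.1 p.2 := by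
    by_contra hc
    push_neg at hc
    exact hne (by ext i j; exact hc (i, j))
  obtain ⟨pstar, hpstar⟩ := hdiff
  set R : Matrix (Fin n) (Fin n) ℝ := fun i j => (1 - (1/2:ℝ)) * P i j + (1/2) * P0 i j with hR
  have hRmem : R ∈ transportPolytope n := comb_mem hP hP0 (by norm_num) (by norm_num)
  have hle : ∀ p : Fin n × Fin n,
      C p.1 p.2 * R p.1 p.2 + ε * (R p.1 p.2 * Real.log (R p.1 p.2)) ≤
      ((C p.1 p.2 * P p.1 p.2 + ε * (P p.1 p.2 * Real.log (P p.1 p.2))) +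
       (C p.1 p.2 * P0 p.1 p.2 + ε * (P0 p.1 p.2 * Real.log (P0 p.1 p.2)))) / 2 := by
    intro p
    have hconv := Real.convexOn_mul_log.2 (Set.mem_Ici.2 (hP.1 p.1 p.2))
      (Set.mem_Ici.2 (hP0.1 p.1 p.2)) (by norm_num : (0:ℝ) ≤ 1 - 1/2) (by norm_num : (0:ℝ) ≤ 1/2)
      (by norm_num)
    simp only [smul_eq_mul] at hconv
    have hRp : R p.1 p.2 = (1 - (1/2:ℝ)) * P p.1 p.2 + (1/2) * P0 p.1 p.2 := rfl
    rw [hRp]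
    nlinarith [hconv]
  have hlt : C pstar.1 pstar.2 * R pstar.1 pstar.2 + ε * (R pstar.1 pstar.2 * Real.log (R pstar.1 pstar.2)) <
      ((C pstar.1 pstar.2 * P pstar.1 pstar.2 + ε * (P pstar.1 pstar.2 * Real.log (P pstar.1 pstar.2))) +
       (C pstar.1 pstar.2 * P0 pstar.1 pstar.2 + ε * (P0 pstar.1 pstar.2 * Real.log (P0 pstar.1 pstar.2)))) / 2 := by
    have hconv := Real.strictConvexOn_mul_log.2 (Set.mem_Ici.2 (hP.1 pstar.1 pstar.2))
      (Set.mem_Ici.2 (hP0.1 pstar.1 pstar.2)) hpstar (by norm_num : (0:ℝ) < 1 - 1/2)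
      (by norm_num : (0:ℝ) < 1/2) (by norm_num)
    simp only [smul_eq_mul] at hconv
    have hRp : R pstar.1 pstar.2 = (1 - (1/2:ℝ)) * P pstar.1 pstar.2 + (1/2) * P0 pstar.1 pstar.2 := rfl
    rw [hRp]
    nlinarith [hconv]
  have hsum : Jf C ε R < (Jf C ε P + Jf C ε P0) / 2 := by
    rw [Jf_eq, Jf_eq, Jf_eq, ← Finset.sum_add_distrib, Finset.sum_div]
    exact Finset.sum_lt_sum (fun p _ => hle p) ⟨pstar, Finset.mem_univ _, hlt⟩
  rw [hJ] at hsum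
  have := hmin R hRmem
  linarith

/-- The entropic regularized optimal transport problem has a unique minimizer
over the transport polytope, with strictly positive entries. -/
theorem entropic_ot_unique_minimizer (n : ℕ) (hn : 1 ≤ n)
    (C : Matrix (Fin n) (Fin n) ℝ) (ε : ℝ) (hε : 0 < ε) :
    ∃ P0 ∈ transportPolytope n,
      (∀ P ∈ transportPolytope n,
        (∑ i, ∑ j, C i j * P0 i j) - ε * matrixEntropy P0 ≤
          (∑ i, ∑ j, C i j * P i j) - ε * matrixEntropy P) ∧
      (∀ P ∈ transportPolytope n,
        (∀ Q ∈ transportPolytope n,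
          (∑ i, ∑ j, C i j * P i j) - ε * matrixEntropy P ≤
            (∑ i, ∑ j, C i j * Q i j) - ε * matrixEntropy Q) → P = P0) ∧
      (∀ i j, 0 < P0 i j) := by
  obtain ⟨P0, hP0mem, hisMin⟩ := (isCompact_polytope n).exists_isMinOn
    ⟨_, uniform_mem n hn⟩ (continuous_Jf C ε).continuousOn
  have hmin : ∀ P ∈ transportPolytope n, Jf C ε P0 ≤ Jf C ε P := fun P hP => hisMin hP
  refine ⟨P0, hP0mem, fun P hP => hmin P hP, fun P hP hPmin => ?_, min_pos hn C hε hP0mem hmin⟩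
  exact min_unique C hε hP hP0mem (le_antisymm (hPmin P0 hP0mem) (hmin P hP)) hmin
end

section
/- Let n ≥ 1, let C be a real n × n matrix, and let ε > 0. Let P⁰ be the unique minimizer over the transport polytope Π_n of J_ε(P) = ∑_{i,j} C_{ij} P_{ij} − ε H(P), where H(P) = −∑_{i,j} P_{ij} log P_{ij}. Then there exist vectors u, v ∈ ℝ^n with strictly positive entries such that P⁰_{ij} = u_i · exp(−C_{ij}/ε) · v_j for all i, j. -/
/-! The entropic term forces the minimizer to be strictly positive: at a zero entry the slope of
`x log x` is `-∞`, so mixing in a little of the uniform matrix would lower the cost. A positive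
minimizer can then be moved both ways along the directions `(e_a - e_a')(e_b - e_b')ᵀ`, which keep
all marginals, and the first-order conditions along them say that `C_ij + ε log P_ij` has the form
`α_i + β_j`; exponentiating gives the scaling form. -/

open scoped BigOperators

open Real Filter Topology Finset

section EntropicCost

variable {ι κ : Type*} [Fintype ι] [Fintype κ]

noncomputable def entropicCost (C : Matrix ι κ ℝ) (ε : ℝ) (P : Matrix ι κ ℝ) : ℝ :=
  ∑ i, ∑ j, (C i j * P i j - ε * negMulLog (P i j))

theorem sum_mul_sub_mul_matrixEntropy {n : ℕ} (C P : Matrix (Fin n) (Fin n) ℝ) (ε : ℝ) :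
    (∑ i, ∑ j, C i j * P i j) - ε * matrixEntropy P = entropicCost C ε P := by
  simp only [matrixEntropy, entropicCost, negMulLog, sum_sub_distrib, mul_sum, neg_mul,
    mul_neg, sum_neg_distrib]

theorem mul_sub_mul_negMulLog_convexComb_le (c : ℝ) {ε : ℝ} (hε : 0 ≤ ε) {x y t : ℝ}
    (hx : 0 ≤ x) (hy : 0 ≤ y) (ht₀ : 0 ≤ t) (ht₁ : t ≤ 1) :
    c * ((1 - t) * x + t * y) - ε * negMulLog ((1 - t) * x + t * y) ≤
      (1 - t) * (c * x - ε * negMulLog x) + t * (c * y - ε * negMulLog y) := by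
  have h := concaveOn_negMulLog.2 (Set.mem_Ici.2 hx) (Set.mem_Ici.2 hy)
    (sub_nonneg.2 ht₁) ht₀ (by ring)
  simp only [smul_eq_mul] at h
  nlinarith [mul_le_mul_of_nonneg_left h hε]

theorem mul_sub_mul_negMulLog_mul (c ε t y : ℝ) :
    c * (t * y) - ε * negMulLog (t * y) = t * (c * y - ε * negMulLog y) + ε * t * y * log t := by
  rw [negMulLog_mul, negMulLog]
  ring

theorem entropicCost_convexComb_le_of_eq_zero (C : Matrix ι κ ℝ) {ε : ℝ} (hε : 0 ≤ ε)
    {P U : Matrix ι κ ℝ} (hP : ∀ i j, 0 ≤ P i j) (hU : ∀ i j, 0 ≤ U i j) {a : ι} {b : κ}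
    (hab : P a b = 0) {t : ℝ} (ht₀ : 0 < t) (ht₁ : t ≤ 1) :
    entropicCost C ε ((1 - t) • P + t • U) ≤
      (1 - t) * entropicCost C ε P + t * entropicCost C ε U + ε * t * U a b * log t := by
  set gap : ι → κ → ℝ := fun i j => (1 - t) * (C i j * P i j - ε * negMulLog (P i j)) +
    t * (C i j * U i j - ε * negMulLog (U i j)) -
    (C i j * ((1 - t) * P i j + t * U i j) - ε * negMulLog ((1 - t) * P i j + t * U i j))
  have hgap : ∀ i j, 0 ≤ gap i j := fun i j =>
    sub_nonneg.2 (mul_sub_mul_negMulLog_convexComb_le _ hε (hP i j) (hU i j) ht₀.le ht₁)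
  have hgap_ab : gap a b = -(ε * t * U a b * log t) := by
    simp only [gap, hab, mul_zero, zero_add, negMulLog_zero, sub_zero,
      mul_sub_mul_negMulLog_mul]
    ring
  have hsum : gap a b ≤ ∑ i, ∑ j, gap i j :=
    (single_le_sum (fun j _ => hgap a j) (mem_univ b)).trans
      (single_le_sum (f := fun i => ∑ j, gap i j) (fun i _ => sum_nonneg fun j _ => hgap i j)
        (mem_univ a))
  have hsum_gap : ∑ i, ∑ j, gap i j = (1 - t) * entropicCost C ε P + t * entropicCost C ε U -
      entropicCost C ε ((1 - t) • P + t • U) := by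
    simp only [entropicCost, Matrix.add_apply, Matrix.smul_apply, smul_eq_mul, mul_sum,
      ← sum_add_distrib, ← sum_sub_distrib, gap]
  linarith

theorem pos_of_isMinOn_entropicCost {C : Matrix ι κ ℝ} {ε : ℝ} (hε : 0 < ε)
    {S : Set (Matrix ι κ ℝ)} (hS : Convex ℝ S) {U : Matrix ι κ ℝ} (hUS : U ∈ S)
    (hU : ∀ i j, 0 < U i j) {P : Matrix ι κ ℝ} (hPS : P ∈ S) (hP : ∀ i j, 0 ≤ P i j)
    (hmin : IsMinOn (entropicCost C ε) S P) (a : ι) (b : κ) : 0 < P a b := by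
  refine (hP a b).lt_of_ne' fun hab => ?_
  set A := entropicCost C ε U - entropicCost C ε P
  have hsmall : ∀ᶠ t in 𝓝[>] 0, t < 1 ∧ log t < -A / (ε * U a b) :=
    ((eventually_lt_nhds one_pos).filter_mono nhdsWithin_le_nhds).and
      (tendsto_log_nhdsGT_zero.eventually_lt_atBot _)
  obtain ⟨t, ⟨ht₁, hlog⟩, ht₀ : 0 < t⟩ := (hsmall.and self_mem_nhdsWithin).exists
  have hQ := (isMinOn_iff.1 hmin) _ (hS hPS hUS (sub_nonneg.2 ht₁.le) ht₀.le (by ring))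
  have hle := entropicCost_convexComb_le_of_eq_zero C hε.le hP (fun i j => (hU i j).le) hab
    ht₀ ht₁.le
  have hgain : A + ε * U a b * log t < 0 := by
    have := (lt_div_iff₀ (mul_pos hε (hU a b))).1 hlog
    linarith
  linarith [mul_neg_of_pos_of_neg ht₀ hgain]

theorem hasDerivAt_entropicCost_add_smul (C : Matrix ι κ ℝ) (ε : ℝ) {P : Matrix ι κ ℝ}
    (hP : ∀ i j, 0 < P i j) (D : Matrix ι κ ℝ) :
    HasDerivAt (fun t : ℝ => entropicCost C ε (P + t • D))
      (∑ i, ∑ j, (C i j + ε * (log (P i j) + 1)) * D i j) 0 := by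
  refine HasDerivAt.fun_sum fun i _ => HasDerivAt.fun_sum fun j _ => ?_
  simp only [Matrix.add_apply, Matrix.smul_apply, smul_eq_mul]
  have hline : HasDerivAt (fun t : ℝ => P i j + t * D i j) (D i j) 0 := by
    simpa using ((hasDerivAt_id (0 : ℝ)).mul_const (D i j)).const_add (P i j)
  have hent : HasDerivAt (fun t : ℝ => negMulLog (P i j + t * D i j))
      ((-log (P i j) - 1) * D i j) 0 :=
    (hasDerivAt_negMulLog (hP i j).ne').comp_of_eq 0 hline (by ring)
  exact ((hline.const_mul (C i j)).sub (hent.const_mul ε)).congr_deriv (by ring)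

theorem sum_mul_eq_zero_of_isMinOn_entropicCost {C : Matrix ι κ ℝ} {ε : ℝ}
    {S : Set (Matrix ι κ ℝ)} {P : Matrix ι κ ℝ} (hP : ∀ i j, 0 < P i j)
    (hmin : IsMinOn (entropicCost C ε) S P) {D : Matrix ι κ ℝ}
    (hD : ∀ᶠ t in 𝓝 (0 : ℝ), P + t • D ∈ S) :
    ∑ i, ∑ j, (C i j + ε * (log (P i j) + 1)) * D i j = 0 := by
  refine IsLocalMin.hasDerivAt_eq_zero ?_ (hasDerivAt_entropicCost_add_smul C ε hP D)
  filter_upwards [hD] with t ht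
  simpa using (isMinOn_iff.1 hmin) _ ht

end EntropicCost

theorem sum_mul_vecMulVec_single_sub_single {ι κ : Type*} [Fintype ι] [Fintype κ]
    [DecidableEq ι] [DecidableEq κ] (F : Matrix ι κ ℝ) (a a' : ι) (b b' : κ) :
    ∑ i, ∑ j, F i j * Matrix.vecMulVec (Pi.single a 1 - Pi.single a' 1)
        (Pi.single b 1 - Pi.single b' 1) i j = F a b - F a' b - (F a b' - F a' b') := by
  simp [Matrix.vecMulVec_apply, Pi.single_apply, mul_sub, sum_sub_distrib]

theorem exists_eq_add_of_add_eq_add {ι κ : Type*} [Nonempty ι] [Nonempty κ] (G : ι → κ → ℝ)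
    (hG : ∀ a a' b b', G a b + G a' b' = G a b' + G a' b) :
    ∃ (α : ι → ℝ) (β : κ → ℝ), ∀ i j, G i j = α i + β j := by
  obtain ⟨i₀⟩ := ‹Nonempty ι›
  obtain ⟨j₀⟩ := ‹Nonempty κ›
  exact ⟨fun i => G i j₀ - G i₀ j₀, fun j => G i₀ j, fun i j => by linarith [hG i i₀ j j₀]⟩

theorem convex_transportPolytope (n : ℕ) : Convex ℝ (transportPolytope n) := by
  rintro P ⟨hP, hProw, hPcol⟩ Q ⟨hQ, hQrow, hQcol⟩ s t hs ht hst
  simp only [transportPolytope, Set.mem_ofPred_eq, Matrix.add_apply, Matrix.smul_apply,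
    smul_eq_mul, sum_add_distrib, ← mul_sum, hProw, hQrow, hPcol, hQcol]
  refine ⟨fun i j => by have := hP i j; have := hQ i j; positivity, ?_, ?_⟩ <;>
  · intro
    rw [← add_mul, hst, one_mul]

theorem uniform_mem_transportPolytope {n : ℕ} (hn : n ≠ 0) :
    Matrix.of (fun _ _ => 1 / (n : ℝ) / n) ∈ transportPolytope n := by
  refine ⟨fun _ _ => by simp only [Matrix.of_apply]; positivity, fun _ => ?_, fun _ => ?_⟩ <;>
  · simp only [Matrix.of_apply, sum_const, card_univ, Fintype.card_fin, nsmul_eq_mul]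
    field_simp

theorem eventually_add_smul_mem_transportPolytope {n : ℕ} {P : Matrix (Fin n) (Fin n) ℝ}
    (hP : P ∈ transportPolytope n) (hpos : ∀ i j, 0 < P i j) {D : Matrix (Fin n) (Fin n) ℝ}
    (hrow : ∀ i, ∑ j, D i j = 0) (hcol : ∀ j, ∑ i, D i j = 0) :
    ∀ᶠ t in 𝓝 (0 : ℝ), P + t • D ∈ transportPolytope n := by
  have hnonneg : ∀ i j, ∀ᶠ t in 𝓝 (0 : ℝ), 0 ≤ P i j + t * D i j := fun i j => by
    have : Tendsto (fun t : ℝ => P i j + t * D i j) (𝓝 0) (𝓝 (P i j)) :=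
      (continuous_const.add (continuous_id.mul continuous_const)).tendsto' _ _ (by simp)
    exact (this.eventually (lt_mem_nhds (hpos i j))).mono fun _ => le_of_lt
  filter_upwards [eventually_all.2 fun i => eventually_all.2 (hnonneg i)] with t ht
  simp only [transportPolytope, Set.mem_ofPred_eq, Matrix.add_apply, Matrix.smul_apply,
    smul_eq_mul, sum_add_distrib, ← mul_sum, hP.2.1, hP.2.2, hrow, hcol, mul_zero, add_zero,
    implies_true, and_true]
  exact ht

theorem add_eq_add_of_isMinOn_transportPolytope {n : ℕ} {C : Matrix (Fin n) (Fin n) ℝ} {ε : ℝ}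
    {P : Matrix (Fin n) (Fin n) ℝ} (hP : P ∈ transportPolytope n) (hpos : ∀ i j, 0 < P i j)
    (hmin : IsMinOn (entropicCost C ε) (transportPolytope n) P) (a a' b b' : Fin n) :
    C a b + ε * log (P a b) + (C a' b' + ε * log (P a' b')) =
      C a b' + ε * log (P a b') + (C a' b + ε * log (P a' b)) := by
  have hD := eventually_add_smul_mem_transportPolytope hP hpos
    (D := Matrix.vecMulVec (Pi.single a 1 - Pi.single a' 1) (Pi.single b 1 - Pi.single b' 1))
    (fun i => by simp [Matrix.vecMulVec_apply, ← mul_sum])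
    (fun j => by simp [Matrix.vecMulVec_apply, ← sum_mul])
  have h := (sum_mul_vecMulVec_single_sub_single (fun i j => C i j + ε * (log (P i j) + 1))
    a a' b b').symm.trans (sum_mul_eq_zero_of_isMinOn_entropicCost hpos hmin hD)
  linarith

/-- The minimizer of the entropic regularized optimal transport problem has the
diagonal-scaling (Sinkhorn) form `P⁰_{ij} = u_i exp(-C_{ij}/ε) v_j` with
positive vectors `u`, `v`. -/
theorem entropic_ot_sinkhorn_form (n : ℕ) (hn : 1 ≤ n)
    (C : Matrix (Fin n) (Fin n) ℝ) (ε : ℝ) (hε : 0 < ε)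
    (P0 : Matrix (Fin n) (Fin n) ℝ) (hP0mem : P0 ∈ transportPolytope n)
    (hP0min : ∀ P ∈ transportPolytope n,
      (∑ i, ∑ j, C i j * P0 i j) - ε * matrixEntropy P0 ≤
        (∑ i, ∑ j, C i j * P i j) - ε * matrixEntropy P) :
    ∃ u v : Fin n → ℝ, (∀ i, 0 < u i) ∧ (∀ j, 0 < v j) ∧
      ∀ i j, P0 i j = u i * Real.exp (-C i j / ε) * v j := by
  have hmin : IsMinOn (entropicCost C ε) (transportPolytope n) P0 := isMinOn_iff.2 fun P hP => by
    simpa only [sum_mul_sub_mul_matrixEntropy] using hP0min P hP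
  have hpos := pos_of_isMinOn_entropicCost hε (convex_transportPolytope n)
    (uniform_mem_transportPolytope (by omega))
    (fun _ _ => by simp only [Matrix.of_apply]; positivity) hP0mem hP0mem.1 hmin
  have : Nonempty (Fin n) := ⟨⟨0, hn⟩⟩
  obtain ⟨α, β, hαβ⟩ := exists_eq_add_of_add_eq_add (fun i j => C i j + ε * log (P0 i j))
    (add_eq_add_of_isMinOn_transportPolytope hP0mem hpos hmin)
  refine ⟨fun i => exp (α i / ε), fun j => exp (β j / ε), fun _ => exp_pos _, fun _ => exp_pos _,
    fun i j => ?_⟩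
  rw [← exp_add, ← exp_add, ← exp_log (hpos i j)]
  congr 1
  field_simp
  linarith [hαβ i j]
end

section
/- Let n ≥ 1 and let C be a real n × n matrix. For ε > 0 let P⁰(ε) denote the unique minimizer over the transport polytope Π_n of ∑_{i,j} C_{ij} P_{ij} − ε H(P), where H(P) = −∑_{i,j} P_{ij} log P_{ij}. Then as ε → ∞, P⁰(ε) converges to the matrix P̄ with all entries equal to 1/n², i.e., P⁰(ε)_{ij} → 1/n² for all i, j. -/
open scoped BigOperators
open Filter

open Real InformationTheory Topology

/-! For `P ∈ Π_n` the entropy deficit `H(P̄) - H(P)` is the relative entropy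
`KL(P ‖ P̄) = ∑ᵢⱼ klFun (n² Pᵢⱼ) / n²`, a sum of nonnegative terms. Comparing `P⁰(ε)` with `P̄`
in the minimization gives `ε · KL(P⁰(ε) ‖ P̄) ≤ 2 ∑ᵢⱼ |Cᵢⱼ|`, so each `klFun (n² P⁰(ε)ᵢⱼ)` tends
to `0`, and `(√t - 1)² ≤ klFun t` turns this into `n² P⁰(ε)ᵢⱼ → 1`. -/

theorem sq_sqrt_sub_one_le_klFun {t : ℝ} (ht : 0 ≤ t) : (√t - 1) ^ 2 ≤ klFun t := by
  rcases ht.eq_or_lt with rfl | ht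
  · simp [klFun_zero]
  obtain ⟨s, hs, rfl⟩ : ∃ s, 0 < s ∧ t = s ^ 2 := ⟨√t, sqrt_pos.2 ht, (sq_sqrt ht.le).symm⟩
  -- `log s ≥ 1 - s⁻¹`, multiplied by `2 s ^ 2`, is the claim
  have hlog : 1 - s⁻¹ ≤ log s := one_sub_inv_le_log_of_pos hs
  have hinv : s ^ 2 * s⁻¹ = s := by field_simp
  rw [klFun_apply, sqrt_sq hs.le, log_pow, Nat.cast_ofNat]
  nlinarith [mul_le_mul_of_nonneg_left hlog (by positivity : (0:ℝ) ≤ 2 * s ^ 2)]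

theorem tendsto_nhds_one_of_tendsto_klFun {β : Type*} {l : Filter β} {f : β → ℝ}
    (hf : ∀ᶠ b in l, 0 ≤ f b) (h : Tendsto (fun b => klFun (f b)) l (𝓝 0)) :
    Tendsto f l (𝓝 1) := by
  have hsqrt : Tendsto (fun b => √(f b)) l (𝓝 1) := by
    rw [tendsto_iff_norm_sub_tendsto_zero]
    refine squeeze_zero' (.of_forall fun _ => norm_nonneg _)
      (hf.mono fun b hb => abs_le_sqrt (sq_sqrt_sub_one_le_klFun hb)) ?_
    simpa using h.sqrt
  have := hsqrt.pow 2
  rw [one_pow] at this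
  exact this.congr' (hf.mono fun b hb => sq_sqrt hb)

theorem sum_klFun_card_mul_div_card {α : Type*} [Fintype α] {p : α → ℝ} (hp : ∑ a, p a = 1) :
    ∑ a, klFun (Fintype.card α * p a) / Fintype.card α =
      log (Fintype.card α) + ∑ a, p a * log (p a) := by
  set N : ℝ := (Fintype.card α : ℝ)
  have : Nonempty α := by
    by_contra h
    simp [not_nonempty_iff.1 h] at hp
  have hN : N ≠ 0 := by simp [N]
  have hterm (x : ℝ) : klFun (N * x) / N = x * log N + x * log x + N⁻¹ - x := by
    rcases eq_or_ne x 0 with rfl | hx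
    · simp [klFun_zero]
    rw [klFun_apply, log_mul hN hx]
    field_simp
  simp only [hterm, Finset.sum_add_distrib, Finset.sum_sub_distrib, ← Finset.sum_mul, hp,
    Finset.sum_const, Finset.card_univ, nsmul_eq_mul]
  field_simp
  ring

noncomputable def uniformPlan (n : ℕ) : Matrix (Fin n) (Fin n) ℝ :=
  Matrix.of fun _ _ => (1 : ℝ) / (n ^ 2 : ℕ)

section TransportPlans

variable {n : ℕ} {P : Matrix (Fin n) (Fin n) ℝ}

theorem sum_sum_klFun_eq_log_sub_matrixEntropy (hP : ∑ i, ∑ j, P i j = 1) :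
    ∑ i, ∑ j, klFun ((n ^ 2 : ℕ) * P i j) / (n ^ 2 : ℕ) =
      log (n ^ 2 : ℕ) - matrixEntropy P := by
  have h := sum_klFun_card_mul_div_card (p := fun ij : Fin n × Fin n => P ij.1 ij.2)
    (by rw [Fintype.sum_prod_type]; exact hP)
  simp only [Fintype.card_prod, Fintype.card_fin, Fintype.sum_prod_type] at h
  rw [matrixEntropy, sq, h]
  ring

theorem sum_sum_eq_one_of_mem_transportPolytope (hn : n ≠ 0) (hP : P ∈ transportPolytope n) :
    ∑ i, ∑ j, P i j = 1 := by
  simp [hP.2.1, hn]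

theorem le_one_of_mem_transportPolytope (hP : P ∈ transportPolytope n) (i j : Fin n) :
    P i j ≤ 1 :=
  calc P i j ≤ ∑ j', P i j' := Finset.single_le_sum (fun j' _ => hP.1 i j') (Finset.mem_univ j)
    _ = 1 / n := hP.2.1 i
    _ ≤ 1 := div_le_one_of_le₀ (Nat.one_le_cast.2 i.pos) n.cast_nonneg

theorem abs_sum_sum_mul_le_of_mem_transportPolytope (C : Matrix (Fin n) (Fin n) ℝ)
    (hP : P ∈ transportPolytope n) : |∑ i, ∑ j, C i j * P i j| ≤ ∑ i, ∑ j, |C i j| := by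
  refine (Finset.abs_sum_le_sum_abs _ _).trans (Finset.sum_le_sum fun i _ => ?_)
  refine (Finset.abs_sum_le_sum_abs _ _).trans (Finset.sum_le_sum fun j _ => ?_)
  rw [abs_mul, abs_of_nonneg (hP.1 i j)]
  exact mul_le_of_le_one_right (abs_nonneg _) (le_one_of_mem_transportPolytope hP i j)

theorem uniformPlan_mem_transportPolytope (n : ℕ) : uniformPlan n ∈ transportPolytope n := by
  have hline : ∑ _ : Fin n, (1 : ℝ) / (n ^ 2 : ℕ) = 1 / n := by
    simp only [Finset.sum_const, Finset.card_univ, Fintype.card_fin, nsmul_eq_mul, Nat.cast_pow]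
    field_simp
  exact ⟨fun _ _ => show (0 : ℝ) ≤ 1 / (n ^ 2 : ℕ) by positivity, fun _ => hline, fun _ => hline⟩

theorem matrixEntropy_uniformPlan (hn : n ≠ 0) :
    matrixEntropy (uniformPlan n) = log (n ^ 2 : ℕ) := by
  have h := sum_sum_klFun_eq_log_sub_matrixEntropy
    (sum_sum_eq_one_of_mem_transportPolytope hn (uniformPlan_mem_transportPolytope n))
  have hmass (i j : Fin n) : ((n ^ 2 : ℕ) : ℝ) * uniformPlan n i j = 1 := by
    simp [uniformPlan, hn]
  simp only [hmass, klFun_one, zero_div, Finset.sum_const_zero] at h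
  linarith

theorem klFun_div_le_matrixEntropy_uniformPlan_sub (hn : n ≠ 0) (hP : P ∈ transportPolytope n)
    (i j : Fin n) :
    klFun ((n ^ 2 : ℕ) * P i j) / (n ^ 2 : ℕ) ≤
      matrixEntropy (uniformPlan n) - matrixEntropy P := by
  have hterm_nonneg (i j : Fin n) : 0 ≤ klFun ((n ^ 2 : ℕ) * P i j) / (n ^ 2 : ℕ) :=
    div_nonneg (klFun_nonneg (mul_nonneg (by positivity) (hP.1 i j))) (by positivity)
  rw [matrixEntropy_uniformPlan hn,
    ← sum_sum_klFun_eq_log_sub_matrixEntropy (sum_sum_eq_one_of_mem_transportPolytope hn hP)]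
  calc _ ≤ ∑ j', klFun ((n ^ 2 : ℕ) * P i j') / (n ^ 2 : ℕ) :=
        Finset.single_le_sum (fun j' _ => hterm_nonneg i j') (Finset.mem_univ j)
    _ ≤ _ := Finset.single_le_sum (fun i' _ => Finset.sum_nonneg fun j' _ => hterm_nonneg i' j')
        (Finset.mem_univ i)

theorem mul_matrixEntropy_sub_le_two_mul_sum_abs
    {Q C : Matrix (Fin n) (Fin n) ℝ} {ε : ℝ}
    (hP : P ∈ transportPolytope n) (hQ : Q ∈ transportPolytope n)
    (hopt : (∑ i, ∑ j, C i j * P i j) - ε * matrixEntropy P ≤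
      (∑ i, ∑ j, C i j * Q i j) - ε * matrixEntropy Q) :
    ε * (matrixEntropy Q - matrixEntropy P) ≤ 2 * ∑ i, ∑ j, |C i j| := by
  have hCP := abs_le.1 (abs_sum_sum_mul_le_of_mem_transportPolytope C hP)
  have hCQ := abs_le.1 (abs_sum_sum_mul_le_of_mem_transportPolytope C hQ)
  linarith [hCP.1, hCQ.2]

end TransportPlans

/-- As `ε → ∞`, the entropic optimal transport plan `P⁰(ε)` converges to the
maximally diffuse plan with all entries equal to `1/n²`. -/
theorem entropic_ot_plan_diffuse_limit (n : ℕ) (hn : 1 ≤ n)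
    (C : Matrix (Fin n) (Fin n) ℝ)
    (P0 : ℝ → Matrix (Fin n) (Fin n) ℝ)
    (hP0 : ∀ ε : ℝ, 0 < ε → P0 ε ∈ transportPolytope n ∧
      ∀ P ∈ transportPolytope n,
        (∑ i, ∑ j, C i j * P0 ε i j) - ε * matrixEntropy (P0 ε) ≤
          (∑ i, ∑ j, C i j * P i j) - ε * matrixEntropy P) :
    Tendsto P0 atTop
      (nhds (Matrix.of fun _ _ => (1 : ℝ) / (n ^ 2 : ℕ))) := by
  have hn0 : n ≠ 0 := Nat.one_le_iff_ne_zero.1 hn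
  set N : ℝ := ((n ^ 2 : ℕ) : ℝ)
  have hN : 0 < N := by positivity
  have hpos : ∀ᶠ ε : ℝ in atTop, 0 < ε := eventually_gt_atTop 0
  refine tendsto_pi_nhds.2 fun i => tendsto_pi_nhds.2 fun j => ?_
  have hscaled_nonneg : ∀ᶠ ε in atTop, 0 ≤ N * P0 ε i j :=
    hpos.mono fun ε hε => mul_nonneg hN.le ((hP0 ε hε).1.1 i j)
  have hkl_le : ∀ᶠ ε in atTop, klFun (N * P0 ε i j) ≤ N * (2 * ∑ i, ∑ j, |C i j|) / ε :=
    hpos.mono fun ε hε => by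
      obtain ⟨hmem, hopt⟩ := hP0 ε hε
      have hgap := mul_matrixEntropy_sub_le_two_mul_sum_abs hmem
        (uniformPlan_mem_transportPolytope n) (hopt _ (uniformPlan_mem_transportPolytope n))
      have hterm := klFun_div_le_matrixEntropy_uniformPlan_sub hn0 hmem i j
      rw [le_div_iff₀ hε]
      rw [div_le_iff₀ hN] at hterm
      nlinarith
  have hkl : Tendsto (fun ε => klFun (N * P0 ε i j)) atTop (𝓝 0) :=
    squeeze_zero' (hscaled_nonneg.mono fun _ => klFun_nonneg) hkl_le
      (tendsto_const_nhds.div_atTop tendsto_id)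
  simpa [N, hn0, mul_div_cancel_left₀] using
    (tendsto_nhds_one_of_tendsto_klFun hscaled_nonneg hkl).div_const N
end

section
/- Let n ≥ 1, let X_1, …, X_n ∈ ℝ^d and h_1, …, h_n ∈ ℝ^d, and set C_{ij} = ‖X_i − h_j‖². Suppose the problem min_{P ∈ Π_n} ∑_{i,j} C_{ij} P_{ij} has a unique minimizer, equal to the scaled permutation matrix (1/n)·P_σ for a permutation σ (i.e., entries (1/n)·𝟙[j = σ(i)]). For ε > 0 let P⁰(ε) be the unique minimizer of ∑_{i,j} C_{ij} P_{ij} − ε H(P) over Π_n, and define the soft rank R̂^{s,ε}(X_i) = ∑_j (P⁰(ε)_{ij} / ∑_{j'} P⁰(ε)_{ij'}) h_j. Then for every i, R̂^{s,ε}(X_i) → h_{σ(i)} as ε → 0⁺. -/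
open scoped BigOperators
open Filter

lemma softrank_mul_log_bounds {p : ℝ} (h0 : 0 ≤ p) (h1 : p ≤ 1) :
    p - 1 ≤ p * Real.log p ∧ p * Real.log p ≤ 0 := by
  rcases eq_or_lt_of_le h0 with h | h
  · simp [← h]
  refine ⟨?_, mul_nonpos_of_nonneg_of_nonpos h0 (Real.log_nonpos h0 h1)⟩
  have hlog : Real.log p⁻¹ ≤ p⁻¹ - 1 := Real.log_le_sub_one_of_pos (by positivity)
  rw [Real.log_inv] at hlog
  have h2 := mul_le_mul_of_nonneg_left hlog h0
  have h3 : p * p⁻¹ = 1 := mul_inv_cancel₀ (ne_of_gt h)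
  nlinarith

/-- In the small-regularization limit, the soft rank map recovers the hard
empirical rank map: `R̂^{s,ε}(X_i) → h_{σ(i)}` as `ε → 0⁺`. -/
theorem soft_rank_recovers_hard_rank (n : ℕ) (hn : 1 ≤ n) (d : ℕ)
    (X h : Fin n → EuclideanSpace ℝ (Fin d))
    (C : Matrix (Fin n) (Fin n) ℝ) (hC : ∀ i j, C i j = ‖X i - h j‖ ^ 2)
    (σ : Equiv.Perm (Fin n))
    (Phard : Matrix (Fin n) (Fin n) ℝ)
    (hPhard : ∀ i j, Phard i j = if j = σ i then (1 : ℝ) / n else 0)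
    (hPhardMin : ∀ P ∈ transportPolytope n,
      ∑ i, ∑ j, C i j * Phard i j ≤ ∑ i, ∑ j, C i j * P i j)
    (hPhardUnique : ∀ P ∈ transportPolytope n,
      (∀ Q ∈ transportPolytope n,
        ∑ i, ∑ j, C i j * P i j ≤ ∑ i, ∑ j, C i j * Q i j) → P = Phard)
    (P0 : ℝ → Matrix (Fin n) (Fin n) ℝ)
    (hP0 : ∀ ε : ℝ, 0 < ε → P0 ε ∈ transportPolytope n ∧
      ∀ P ∈ transportPolytope n,
        (∑ i, ∑ j, C i j * P0 ε i j) - ε * matrixEntropy (P0 ε) ≤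
          (∑ i, ∑ j, C i j * P i j) - ε * matrixEntropy P) :
    ∀ i : Fin n,
      Tendsto (fun ε : ℝ => ∑ j, (P0 ε i j / ∑ j', P0 ε i j') • h j)
        (nhdsWithin 0 (Set.Ioi 0)) (nhds (h (σ i))) := by
  have hn1 : (1:ℝ) ≤ (n:ℝ) := by exact_mod_cast hn
  have hnpos : (0:ℝ) < (n:ℝ) := by linarith
  set K := transportPolytope n with hK
  set cost : Matrix (Fin n) (Fin n) ℝ → ℝ := fun P => ∑ i, ∑ j, C i j * P i j with hcostdef
  -- entries of members of K lie in [0,1]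
  have hentry : ∀ P ∈ K, ∀ a b, P a b ≤ 1 := by
    intro P hP a b
    calc P a b ≤ ∑ j', P a j' :=
          Finset.single_le_sum (fun j' _ => hP.1 a j') (Finset.mem_univ b)
      _ = 1 / n := hP.2.1 a
      _ ≤ 1 := by rw [div_le_one hnpos]; exact hn1
  -- Phard is in K
  have hPhardK : Phard ∈ K := by
    refine ⟨fun i j => ?_, fun i => ?_, fun j => ?_⟩
    · rw [hPhard]; positivity
    · simp only [hPhard, Finset.sum_ite_eq' Finset.univ (σ i) fun _ => (1:ℝ)/n,
        Finset.mem_univ, if_true]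
    · have : ∀ i : Fin n, Phard i j = if i = σ.symm j then (1:ℝ)/n else 0 := by
        intro i
        rw [hPhard]
        by_cases hi : i = σ.symm j
        · subst hi
          simp
        · rw [if_neg hi, if_neg fun hji => hi (by simp [hji])]
      simp only [this, Finset.sum_ite_eq' Finset.univ (σ.symm j) fun _ => (1:ℝ)/n,
        Finset.mem_univ, if_true]
  -- entropy bounds on K
  have hHnonneg : ∀ P ∈ K, 0 ≤ matrixEntropy P := by
    intro P hP
    rw [matrixEntropy, neg_nonneg]
    refine Finset.sum_nonpos fun a _ => Finset.sum_nonpos fun b _ =>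
      (softrank_mul_log_bounds (hP.1 a b) (hentry P hP a b)).2
  have hHle : ∀ P ∈ K, matrixEntropy P ≤ (n:ℝ)^2 := by
    intro P hP
    rw [matrixEntropy]
    have : -((n:ℝ)^2) ≤ ∑ a, ∑ b, P a b * Real.log (P a b) := by
      have : ∀ a : Fin n, -(n:ℝ) ≤ ∑ b, P a b * Real.log (P a b) := by
        intro a
        calc -(n:ℝ) = ∑ _b : Fin n, (-1 : ℝ) := by simp
          _ ≤ ∑ b, P a b * Real.log (P a b) := Finset.sum_le_sum fun b _ => by
              have := (softrank_mul_log_bounds (hP.1 a b) (hentry P hP a b)).1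
              have := hP.1 a b
              linarith
      calc -((n:ℝ)^2) = ∑ _a : Fin n, -(n:ℝ) := by simp; ring
        _ ≤ _ := Finset.sum_le_sum fun a _ => this a
    linarith
  -- cost bound for the regularized minimizers
  have hcost : ∀ ε : ℝ, 0 < ε → cost (P0 ε) ≤ cost Phard + ε * (n:ℝ)^2 := by
    intro ε hε
    have h2 := (hP0 ε hε).2 Phard hPhardK
    have hH1 := hHle (P0 ε) (hP0 ε hε).1
    have hH0 := hHnonneg Phard hPhardK
    simp only [hcostdef]
    nlinarith
  -- continuity facts
  have happ : ∀ a b : Fin n, Continuous fun P : Matrix (Fin n) (Fin n) ℝ => P a b :=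
    fun a b => (continuous_apply b).comp (continuous_apply a)
  have hcostCont : Continuous cost :=
    continuous_finset_sum _ fun a _ => continuous_finset_sum _ fun b _ =>
      continuous_const.mul (happ a b)
  -- K is compact
  have hKclosed : IsClosed K := by
    have hKeq : K = (⋂ a, ⋂ b, {P : Matrix (Fin n) (Fin n) ℝ | 0 ≤ P a b}) ∩
        ((⋂ a, {P : Matrix (Fin n) (Fin n) ℝ | ∑ j, P a j = 1/n}) ∩
         (⋂ b, {P : Matrix (Fin n) (Fin n) ℝ | ∑ i, P i b = 1/n})) := by
      ext P
      simp only [hK, transportPolytope, Set.mem_setOf_eq, Set.mem_inter_iff, Set.mem_iInter]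
    rw [hKeq]
    refine IsClosed.inter (isClosed_iInter fun a => isClosed_iInter fun b =>
        isClosed_le continuous_const (happ a b)) (IsClosed.inter ?_ ?_)
    · exact isClosed_iInter fun a =>
        isClosed_eq (continuous_finset_sum _ fun b _ => happ a b) continuous_const
    · exact isClosed_iInter fun b =>
        isClosed_eq (continuous_finset_sum _ fun a _ => happ a b) continuous_const
  have hKcomp : IsCompact K := by
    have hB : IsCompact (Set.univ.pi fun _ : Fin n => Set.univ.pi fun _ : Fin n =>
        Set.Icc (0:ℝ) 1 : Set (Matrix (Fin n) (Fin n) ℝ)) :=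
      isCompact_univ_pi fun _ => isCompact_univ_pi fun _ => isCompact_Icc
    refine hB.of_isClosed_subset hKclosed ?_
    intro P hP
    rw [Set.mem_univ_pi]
    intro a
    rw [Set.mem_univ_pi]
    intro b
    exact ⟨hP.1 a b, hentry P hP a b⟩
  -- the key convergence: P0 ε → Phard as ε → 0⁺
  have hmain : Tendsto P0 (nhdsWithin 0 (Set.Ioi 0)) (nhds Phard) := by
    rw [tendsto_nhds]
    intro U hU hPU
    set Z : ℕ → Set (Matrix (Fin n) (Fin n) ℝ) :=
      fun m => {P | cost P ≤ cost Phard + 1/(m+1)} ∩ Uᶜ with hZ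
    have hZclosed : ∀ m, IsClosed (Z m) :=
      fun m => (isClosed_le hcostCont continuous_const).inter hU.isClosed_compl
    have hempty : K ∩ ⋂ m, Z m = ∅ := by
      rw [Set.eq_empty_iff_forall_notMem]
      rintro P ⟨hPK, hPZ⟩
      simp only [Set.mem_iInter, hZ, Set.mem_inter_iff, Set.mem_setOf_eq,
        Set.mem_compl_iff] at hPZ
      have h1 : cost P ≤ cost Phard := by
        refine le_of_forall_pos_le_add fun δ hδ => ?_
        obtain ⟨m, hm⟩ := exists_nat_one_div_lt hδ
        exact (hPZ m).1.trans (by linarith)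
      have hPeq : P = Phard :=
        hPhardUnique P hPK fun Q hQ => h1.trans (hPhardMin Q hQ)
      exact (hPZ 0).2 (hPeq ▸ hPU)
    obtain ⟨t, ht⟩ := hKcomp.elim_finite_subfamily_closed Z hZclosed hempty
    set m0 := t.sup id with hm0
    have hZanti : ∀ i ∈ t, Z m0 ⊆ Z i := by
      intro i hi P hP
      have him : (i:ℕ) ≤ m0 := Finset.le_sup (f := id) hi
      obtain ⟨hPc, hPu⟩ := hP
      rw [Set.mem_setOf_eq] at hPc
      refine ⟨Set.mem_setOf_eq ▸ hPc.trans ?_, hPu⟩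
      have : (1:ℝ)/(m0+1) ≤ 1/(i+1) := by
        apply one_div_le_one_div_of_le (by positivity)
        have : (i:ℝ) ≤ (m0:ℝ) := by exact_mod_cast him
        linarith
      linarith
    have hKZ : K ∩ Z m0 = ∅ := by
      rw [Set.eq_empty_iff_forall_notMem]
      rintro P ⟨hPK, hPZ⟩
      have : P ∈ K ∩ ⋂ i ∈ t, Z i := by
        refine ⟨hPK, ?_⟩
        simp only [Set.mem_iInter]
        intro i hi
        exact hZanti i hi hPZ
      rw [ht] at this
      exact this
    have hγ : (0:ℝ) < 1/((m0:ℝ)+1) := by positivity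
    have hmem : Set.Ioo (0:ℝ) (1/((m0:ℝ)+1) / (n:ℝ)^2) ∈ nhdsWithin (0:ℝ) (Set.Ioi 0) :=
      Ioo_mem_nhdsGT_of_mem ⟨le_refl 0, by positivity⟩
    filter_upwards [hmem] with ε hε
    have hεpos : 0 < ε := hε.1
    have hcostε : cost (P0 ε) ≤ cost Phard + 1/((m0:ℝ)+1) := by
      have h1 := hcost ε hεpos
      have h2 : ε * (n:ℝ)^2 < 1/((m0:ℝ)+1) := by
        have := hε.2
        have hn2 : (0:ℝ) < (n:ℝ)^2 := by positivity
        calc ε * (n:ℝ)^2 < (1/((m0:ℝ)+1) / (n:ℝ)^2) * (n:ℝ)^2 := by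
              exact mul_lt_mul_of_pos_right this hn2
          _ = 1/((m0:ℝ)+1) := by field_simp
      linarith
    by_contra hPnotU
    have : P0 ε ∈ K ∩ Z m0 := ⟨(hP0 ε hεpos).1, hcostε, hPnotU⟩
    rw [hKZ] at this
    exact this
  -- conclude
  intro i
  have hentryTendsto : ∀ j : Fin n,
      Tendsto (fun ε : ℝ => P0 ε i j) (nhdsWithin 0 (Set.Ioi 0)) (nhds (Phard i j)) :=
    fun j => ((happ i j).continuousAt).tendsto.comp hmain
  have hlim : Tendsto (fun ε : ℝ => ∑ j, ((n:ℝ) * P0 ε i j) • h j)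
      (nhdsWithin 0 (Set.Ioi 0)) (nhds (∑ j, ((n:ℝ) * Phard i j) • h j)) := by
    refine tendsto_finset_sum _ fun j _ => ?_
    exact (Tendsto.const_mul _ (hentryTendsto j)).smul_const _
  have hsum : (∑ j, ((n:ℝ) * Phard i j) • h j) = h (σ i) := by
    have : ∀ j : Fin n, ((n:ℝ) * Phard i j) • h j
        = if j = σ i then h (σ i) else 0 := by
      intro j
      rw [hPhard]
      by_cases hj : j = σ i
      · subst hj
        simp only [if_true]
        rw [mul_one_div, div_self (ne_of_gt hnpos), one_smul]
      · simp [hj]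
    rw [Finset.sum_congr rfl fun j _ => this j]
    simp
  rw [← hsum]
  refine hlim.congr' ?_
  filter_upwards [self_mem_nhdsWithin] with ε hε
  have hrow := ((hP0 ε hε).1).2.1 i
  refine Finset.sum_congr rfl fun j _ => ?_
  rw [hrow, one_div, div_eq_mul_inv, inv_inv, mul_comm]
end

section
/- Let N ≥ 1, let h_1, …, h_N ∈ ℝ^d be fixed points, and let X = (X_1, …, X_N) be i.i.d. random vectors in ℝ^d with common law μ. Suppose that almost surely the assignment problem min_{σ ∈ S_N} ∑_{i=1}^N ‖X_i − h_{σ(i)}‖² has a unique minimizing permutation σ̂(X). Then σ̂(X) is uniformly distributed on the symmetric group S_N, i.e., P(σ̂(X) = σ) = 1/N! for every permutation σ. -/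
/-!
The squared-Euclidean assignment cost is equivariant under relabelling the samples: permuting
`X` by `ρ` turns the cost of `σ` into the cost of `σ ∘ ρ⁻¹`, so the region where `σ` is optimal is
carried onto the region where `σ ∘ ρ⁻¹` is optimal. The joint law of an i.i.d. sample is a
product measure, which is invariant under permuting coordinates, so all `N!` regions have the same
mass. Almost surely the event `σ̂ = σ` is exactly the region of `σ`, and these events partition
the sample space, so each has probability `1 / N!`.
-/

open MeasureTheory ProbabilityTheory Equiv

section Assignment

variable {ι α β : Type*} [Fintype ι]

def assignmentCost (c : α → β → ℝ) (y : ι → β) (τ : Perm ι) (x : ι → α) : ℝ :=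
  ∑ i, c (x i) (y (τ i))

def optimalAssignmentSet (c : α → β → ℝ) (y : ι → β) (σ : Perm ι) : Set (ι → α) :=
  {x | ∀ τ, assignmentCost c y σ x ≤ assignmentCost c y τ x}

lemma assignmentCost_comp (c : α → β → ℝ) (y : ι → β) (τ ρ : Perm ι) (x : ι → α) :
    assignmentCost c y τ (x ∘ ρ) = assignmentCost c y (τ * ρ⁻¹) x := by
  simpa [assignmentCost] using Equiv.sum_comp ρ fun j => c (x j) (y ((τ * ρ⁻¹) j))

lemma preimage_comp_optimalAssignmentSet (c : α → β → ℝ) (y : ι → β) (σ ρ : Perm ι) :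
    (· ∘ ρ) ⁻¹' optimalAssignmentSet c y σ = optimalAssignmentSet (ι := ι) c y (σ * ρ⁻¹) := by
  ext x
  simp only [Set.mem_preimage, optimalAssignmentSet, Set.mem_ofPred_eq, assignmentCost_comp]
  exact ⟨fun hx τ => by simpa using hx (τ * ρ), fun hx τ => hx (τ * ρ⁻¹)⟩

lemma measurable_assignmentCost [MeasurableSpace α] {c : α → β → ℝ}
    (hc : ∀ b, Measurable (c · b)) (y : ι → β) (τ : Perm ι) :
    Measurable (assignmentCost c y τ) :=
  Finset.measurable_sum _ fun i _ => (hc _).comp (measurable_pi_apply i)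

lemma measurableSet_optimalAssignmentSet [MeasurableSpace α] {c : α → β → ℝ}
    (hc : ∀ b, Measurable (c · b)) (y : ι → β) (σ : Perm ι) :
    MeasurableSet (optimalAssignmentSet c y σ) := by
  rw [optimalAssignmentSet, Set.ofPred_forall]
  exact MeasurableSet.iInter fun τ =>
    measurableSet_le (measurable_assignmentCost hc y σ) (measurable_assignmentCost hc y τ)

lemma measurePreserving_comp_perm [MeasurableSpace α] (μ : Measure α) [SigmaFinite μ]
    (ρ : Perm ι) :
    MeasurePreserving (· ∘ ρ) (Measure.pi fun _ : ι => μ) (Measure.pi fun _ : ι => μ) := by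
  convert measurePreserving_arrowCongr' (fun _ : ι => μ) (fun _ => μ) ρ.symm
    (MeasurableEquiv.refl α) fun _ => MeasurePreserving.id μ using 1
  ext x i
  simp [MeasurableEquiv.arrowCongr', Equiv.arrowCongr']

lemma measure_pi_optimalAssignmentSet_eq [MeasurableSpace α] (μ : Measure α) [SigmaFinite μ]
    {c : α → β → ℝ} (hc : ∀ b, Measurable (c · b)) (y : ι → β) (σ τ : Perm ι) :
    Measure.pi (fun _ => μ) (optimalAssignmentSet c y σ) =
      Measure.pi (fun _ => μ) (optimalAssignmentSet c y τ) := by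
  have h := (measurePreserving_comp_perm μ (τ⁻¹ * σ)).measure_preimage
    (measurableSet_optimalAssignmentSet hc y σ).nullMeasurableSet
  rw [preimage_comp_optimalAssignmentSet, mul_inv_rev, inv_inv, mul_inv_cancel_left] at h
  exact h.symm

end Assignment

lemma measure_fiber_eq_inv_card {Ω G : Type*} [MeasurableSpace Ω] {P : Measure Ω}
    [IsProbabilityMeasure P] [Fintype G] {f : Ω → G}
    (hf : ∀ a, NullMeasurableSet {ω | f ω = a} P)
    (h : ∀ a b, P {ω | f ω = a} = P {ω | f ω = b}) (a : G) :
    P {ω | f ω = a} = (Fintype.card G : ENNReal)⁻¹ := by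
  have hsum : ∑ b, P {ω | f ω = b} = 1 := by
    have hdisj : Pairwise (Function.onFun (AEDisjoint P) fun b => {ω | f ω = b}) :=
      fun b b' hbb' => Disjoint.aedisjoint <| Set.disjoint_left.2 fun ω hb hb' => hbb' (hb ▸ hb')
    have h := measure_iUnion₀ hdisj hf
    rwa [tsum_fintype, Set.iUnion_eq_univ_iff.2 fun ω => ⟨f ω, rfl⟩, measure_univ, eq_comm] at h
  simp_rw [h _ a, Finset.sum_const, Finset.card_univ, nsmul_eq_mul] at hsum
  exact ENNReal.eq_inv_of_mul_eq_one_left (by rwa [mul_comm])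

theorem optimal_assignment_uniformly_distributed_general (N : ℕ) (d : ℕ)
    {Ω : Type*} [MeasureSpace Ω] [IsProbabilityMeasure (ℙ : Measure Ω)]
    (h : Fin N → EuclideanSpace ℝ (Fin d))
    (μ : Measure (EuclideanSpace ℝ (Fin d))) [IsProbabilityMeasure μ]
    (X : Fin N → Ω → EuclideanSpace ℝ (Fin d))
    (hXindep : iIndepFun X ℙ)
    (hXlaw : ∀ i, Measure.map (X i) ℙ = μ)
    (σhat : Ω → Equiv.Perm (Fin N))
    (hσopt : ∀ᵐ ω ∂(ℙ : Measure Ω),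
      (∀ τ : Equiv.Perm (Fin N),
        ∑ i, ‖X i ω - h (σhat ω i)‖ ^ 2 ≤ ∑ i, ‖X i ω - h (τ i)‖ ^ 2) ∧
      (∀ τ : Equiv.Perm (Fin N),
        (∀ τ' : Equiv.Perm (Fin N),
          ∑ i, ‖X i ω - h (τ i)‖ ^ 2 ≤ ∑ i, ‖X i ω - h (τ' i)‖ ^ 2) →
        τ = σhat ω)) :
    ∀ σ : Equiv.Perm (Fin N),
      (ℙ : Measure Ω) {ω | σhat ω = σ} = ((N.factorial : ENNReal))⁻¹ := by
  set c : EuclideanSpace ℝ (Fin d) → EuclideanSpace ℝ (Fin d) → ℝ := fun a b => ‖a - b‖ ^ 2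
  have hc : ∀ b, Measurable (c · b) := fun b => by fun_prop
  set Xvec : Ω → Fin N → EuclideanSpace ℝ (Fin d) := fun ω i => X i ω
  have hX : ∀ i, AEMeasurable (X i) ℙ := fun i =>
    .of_map_ne_zero (by rw [hXlaw]; exact NeZero.ne μ)
  have hXvec : AEMeasurable Xvec ℙ := aemeasurable_pi_lambda _ hX
  have hjoint : Measure.map Xvec ℙ = Measure.pi fun _ => μ := by
    rw [hXindep.map_fun_eq_pi_map hX]
    simp_rw [hXlaw]
  have hfiber : ∀ σ, {ω | σhat ω = σ} =ᵐ[ℙ] Xvec ⁻¹' optimalAssignmentSet c h σ := fun σ => by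
    filter_upwards [hσopt] with ω ⟨hopt, huniq⟩
    exact propext ⟨fun hσ => hσ ▸ hopt, fun hx => (huniq σ hx).symm⟩
  have hlaw : ∀ σ, ℙ {ω | σhat ω = σ} = Measure.pi (fun _ => μ) (optimalAssignmentSet c h σ) :=
    fun σ => by
      rw [measure_congr (hfiber σ), ← hjoint,
        Measure.map_apply_of_aemeasurable hXvec (measurableSet_optimalAssignmentSet hc h σ)]
  intro σ
  rw [measure_fiber_eq_inv_card
    (fun τ => (hXvec.nullMeasurableSet_preimage
      (measurableSet_optimalAssignmentSet hc h τ)).congr (hfiber τ).symm)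
    (fun τ τ' => by rw [hlaw, hlaw, measure_pi_optimalAssignmentSet_eq μ hc]),
    Fintype.card_perm, Fintype.card_fin]

/-- If `X_1, …, X_N` are i.i.d. and the assignment problem
`min_σ ∑ i ‖X_i − h_{σ(i)}‖²` almost surely has a unique minimizing permutation
`σ̂`, then `σ̂` is uniformly distributed on the symmetric group `S_N`. -/
theorem optimal_assignment_uniformly_distributed (N : ℕ) (hN : 1 ≤ N) (d : ℕ)
    {Ω : Type*} [MeasureSpace Ω] [IsProbabilityMeasure (ℙ : Measure Ω)]
    (h : Fin N → EuclideanSpace ℝ (Fin d))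
    (μ : Measure (EuclideanSpace ℝ (Fin d))) [IsProbabilityMeasure μ]
    (X : Fin N → Ω → EuclideanSpace ℝ (Fin d))
    (hXmeas : ∀ i, Measurable (X i))
    (hXindep : iIndepFun X ℙ)
    (hXlaw : ∀ i, Measure.map (X i) ℙ = μ)
    (σhat : Ω → Equiv.Perm (Fin N))
    (hσmeas : ∀ σ : Equiv.Perm (Fin N), MeasurableSet {ω | σhat ω = σ})
    (hσopt : ∀ᵐ ω ∂(ℙ : Measure Ω),
      (∀ τ : Equiv.Perm (Fin N),
        ∑ i, ‖X i ω - h (σhat ω i)‖ ^ 2 ≤ ∑ i, ‖X i ω - h (τ i)‖ ^ 2) ∧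
      (∀ τ : Equiv.Perm (Fin N),
        (∀ τ' : Equiv.Perm (Fin N),
          ∑ i, ‖X i ω - h (τ i)‖ ^ 2 ≤ ∑ i, ‖X i ω - h (τ' i)‖ ^ 2) →
        τ = σhat ω)) :
    ∀ σ : Equiv.Perm (Fin N),
      (ℙ : Measure Ω) {ω | σhat ω = σ} = ((N.factorial : ENNReal))⁻¹ :=
  optimal_assignment_uniformly_distributed_general N d h μ X hXindep hXlaw σhat hσopt
end
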